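/- arXiv:2103.15253 — 4 statements merged into one kernel-verified Lean document; each statement's English description precedes it below -/
import Mathlib

section
/- Let G be a simple graph on n vertices with minimum degree δ(G) ≥ n/2 + 1, and let A be a subset of the vertices with 2 ≤ |A| ≤ n/2. Then the number of edges between A and its complement is at least n − 1. -/
open SimpleGraph Finset

attribute [local instance] Classical.propDecidable

variable {V : Type*}

/-- The number of edges of `G` between `A` and its complement
(counted as ordered pairs going from `A` to `Aᶜ`, so each crossing edge counts once). -/
noncomputable def crossingEdges [Fintype V] (G : SimpleGraph V) (A : Finset V) : ℕ :=
  (Finset.univ.filter (fun p : V × V => p.1 ∈ A ∧ p.2 ∉ A ∧ G.Adj p.1 p.2)).card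

/-- A scramble on `G`: a nonempty collection of nonempty connected vertex subsets (eggs). -/
def IsScramble (G : SimpleGraph V) (S : Finset (Finset V)) : Prop :=
  S.Nonempty ∧ ∀ E ∈ S, E.Nonempty ∧ (G.induce (E : Set V)).Connected

/-- The minimum size of a hitting set for the eggs of `S`. -/
noncomputable def hitNum (S : Finset (Finset V)) : ℕ :=
  sInf {k | ∃ C : Finset V, (∀ E ∈ S, (E ∩ C).Nonempty) ∧ C.card = k}

/-- The minimum size of an egg-cut of `S`, as an extended natural number
(`⊤` if no egg-cut exists). -/
noncomputable def cutNum [Fintype V] (G : SimpleGraph V) (S : Finset (Finset V)) : ℕ∞ :=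
  sInf {k : ℕ∞ | ∃ A : Finset V, (∃ E ∈ S, E ⊆ A) ∧ (∃ E ∈ S, E ⊆ Aᶜ) ∧
    k = (crossingEdges G A : ℕ∞)}

/-- The order of a scramble: the minimum of the smallest hitting set size and the
smallest egg-cut size. -/
noncomputable def scrambleOrder [Fintype V] (G : SimpleGraph V) (S : Finset (Finset V)) : ℕ :=
  (min (hitNum S : ℕ∞) (cutNum G S)).toNat

/-- The scramble number of `G`: the maximum order of a scramble on `G`. -/
noncomputable def scrambleNumber [Fintype V] (G : SimpleGraph V) : ℕ :=
  sSup {k | ∃ S : Finset (Finset V), IsScramble G S ∧ k = scrambleOrder G S}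

/-- The edge-connectivity of `G`: the minimum number of edges whose removal
disconnects `G` (0 if `G` is disconnected). -/
noncomputable def edgeConnectivity [Fintype V] (G : SimpleGraph V) : ℕ :=
  sInf {k | ∃ D : Finset (Sym2 V), ↑D ⊆ G.edgeSet ∧ D.card = k ∧
    ¬ (G.deleteEdges ↑D).Connected}

/-- The vertex-connectivity of `G`: the minimum size of a set of vertices whose removal
disconnects the graph or leaves a single vertex. -/
noncomputable def vertexConnectivity [Fintype V] (G : SimpleGraph V) : ℕ :=
  sInf {k | ∃ S : Finset V, S ≠ Finset.univ ∧ S.card = k ∧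
    (¬ (G.induce ((↑S)ᶜ : Set V)).Connected ∨ (Sᶜ : Finset V).card = 1)}

/-- The Laplacian of a function `f : V → ℤ` at a vertex `v`: the net number of chips
lost at `v` when each vertex `u` is fired `f u` times. -/
noncomputable def lapAt [Fintype V] (G : SimpleGraph V) (f : V → ℤ) (v : V) : ℤ :=
  ∑ u ∈ G.neighborFinset v, (f v - f u)

/-- Two divisors are equivalent when they differ by a sequence of chip-firing moves. -/
def LinEquiv [Fintype V] (G : SimpleGraph V) (D D' : V → ℤ) : Prop :=
  ∃ f : V → ℤ, ∀ v, D v - D' v = lapAt G f v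

/-- A divisor is effective when it is nonnegative everywhere. -/
def Effective (D : V → ℤ) : Prop := ∀ v, 0 ≤ D v

/-- The degree of a divisor: the total number of chips. -/
noncomputable def degDiv [Fintype V] (D : V → ℤ) : ℤ := ∑ v, D v

/-- A divisor has positive rank when, for any vertex `q`, the divisor minus one chip at `q`
is equivalent to an effective divisor. -/
def PositiveRank [Fintype V] (G : SimpleGraph V) (D : V → ℤ) : Prop :=
  ∀ q : V, ∃ D', Effective D' ∧ LinEquiv G (fun v => D v - if v = q then 1 else 0) D'

/-- The (divisorial) gonality of `G`: the minimum degree of an effective divisor of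
positive rank. -/
noncomputable def gonality [Fintype V] (G : SimpleGraph V) : ℕ :=
  sInf {d : ℕ | ∃ D : V → ℤ, Effective D ∧ degDiv D = d ∧ PositiveRank G D}

/-- The independence number of `G`: the maximum size of a set of pairwise
non-adjacent vertices. -/
noncomputable def indepNum [Fintype V] (G : SimpleGraph V) : ℕ :=
  sSup {k | ∃ S : Finset V, (∀ u ∈ S, ∀ v ∈ S, u ≠ v → ¬ G.Adj u v) ∧ S.card = k}

/-- The `ℓ`-th cone over `G`: add `ℓ` new vertices, each adjacent to every other vertex. -/
def cone (G : SimpleGraph V) (ℓ : ℕ) : SimpleGraph (V ⊕ Fin ℓ) :=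
  SimpleGraph.fromRel (fun x y => match x, y with
    | Sum.inl u, Sum.inl v => G.Adj u v
    | _, _ => True)

lemma crossingEdges_eq_sum [Fintype V] (G : SimpleGraph V) (A : Finset V) :
    crossingEdges G A = ∑ v ∈ A, (G.neighborFinset v \ A).card := by
  classical
  rw [crossingEdges, Finset.card_filter, ← Finset.univ_product_univ, Finset.sum_product]
  rw [← Finset.sum_subset (Finset.subset_univ A)]
  · refine Finset.sum_congr rfl fun v hv => ?_
    have heq : G.neighborFinset v \ A = Finset.univ.filter (fun u => u ∉ A ∧ G.Adj v u) := by
      ext u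
      simp [SimpleGraph.mem_neighborFinset, and_comm]
    rw [heq, Finset.card_filter]
    exact Finset.sum_congr rfl fun u _ => by simp [hv]
  · intro v _ hv
    refine Finset.sum_eq_zero fun u _ => ?_
    simp [hv]

theorem stmt0 [Fintype V] [Nonempty V] (G : SimpleGraph V) (A : Finset V)
    (hδ : ((Fintype.card V : ℝ)) / 2 + 1 ≤ (G.minDegree : ℝ))
    (hA2 : 2 ≤ A.card) (hAn : (A.card : ℝ) ≤ (Fintype.card V : ℝ) / 2) :
    ((Fintype.card V : ℝ)) - 1 ≤ (crossingEdges G A : ℝ) := by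
  classical
  set n : ℝ := (Fintype.card V : ℝ) with hn
  set a : ℝ := (A.card : ℝ) with ha
  have ha2 : (2 : ℝ) ≤ a := by rw [ha]; exact_mod_cast hA2
  -- each vertex in A sends at least δ - (a-1) edges out
  have key : ∀ v ∈ A, (G.minDegree : ℝ) - (a - 1) ≤ ((G.neighborFinset v \ A).card : ℝ) := by
    intro v hv
    have hdeg : G.minDegree ≤ G.degree v := G.minDegree_le_degree v
    have hsplit : (G.neighborFinset v \ A).card = G.degree v - (G.neighborFinset v ∩ A).card := by
      have h := Finset.card_inter_add_card_sdiff (G.neighborFinset v) A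
      rw [G.card_neighborFinset_eq_degree] at h
      omega
    have hle : (G.neighborFinset v ∩ A).card ≤ A.card - 1 := by
      have hsub : G.neighborFinset v ∩ A ⊆ A.erase v := by
        intro u hu
        simp only [Finset.mem_inter, SimpleGraph.mem_neighborFinset] at hu
        exact Finset.mem_erase.2 ⟨fun h => G.irrefl (h ▸ hu.1), hu.2⟩
      calc (G.neighborFinset v ∩ A).card ≤ (A.erase v).card := Finset.card_le_card hsub
        _ = A.card - 1 := Finset.card_erase_of_mem hv
    have hinter : (G.neighborFinset v ∩ A).card ≤ G.degree v := by
      rw [← G.card_neighborFinset_eq_degree]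
      exact Finset.card_le_card Finset.inter_subset_left
    have h1 : ((G.neighborFinset v \ A).card : ℝ)
        = (G.degree v : ℝ) - ((G.neighborFinset v ∩ A).card : ℝ) := by
      rw [hsplit]; push_cast [hinter]; ring
    have h2 : ((G.neighborFinset v ∩ A).card : ℝ) ≤ a - 1 := by
      have : ((G.neighborFinset v ∩ A).card : ℝ) ≤ ((A.card - 1 : ℕ) : ℝ) := by
        exact_mod_cast hle
      have hc : ((A.card - 1 : ℕ) : ℝ) = a - 1 := by
        have : 1 ≤ A.card := by omega
        push_cast [this]; ring
      linarith [hc ▸ this]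
    have h3 : (G.minDegree : ℝ) ≤ (G.degree v : ℝ) := by exact_mod_cast hdeg
    linarith [h1, h2, h3]
  have hsum : a * ((G.minDegree : ℝ) - (a - 1)) ≤ (crossingEdges G A : ℝ) := by
    have := crossingEdges_eq_sum G A
    rw [this]
    push_cast
    calc a * ((G.minDegree : ℝ) - (a - 1))
        = ∑ _v ∈ A, ((G.minDegree : ℝ) - (a - 1)) := by
          rw [Finset.sum_const, nsmul_eq_mul, ha]
      _ ≤ ∑ v ∈ A, ((G.neighborFinset v \ A).card : ℝ) := Finset.sum_le_sum key
  have hquad : n - 1 ≤ a * ((G.minDegree : ℝ) - (a - 1)) := by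
    nlinarith [mul_nonneg (by linarith : (0:ℝ) ≤ a) (by linarith : (0:ℝ) ≤ (G.minDegree : ℝ) - (n/2 + 2 - a) + 0),
      mul_nonneg (by linarith : (0:ℝ) ≤ a - 2) (by linarith : (0:ℝ) ≤ n/2 - a)]
  linarith
end

section
/- For any graph G, the scramble number satisfies sn(G) ≥ min(λ(G), |V(G)|), where λ(G) is the edge-connectivity of G. -/
open SimpleGraph Finset

attribute [local instance] Classical.propDecidable

variable {V : Type*}

lemma walk_cross {H : SimpleGraph V} {A : Finset V} :
    ∀ {a b : V}, H.Walk a b → a ∈ A → b ∉ A → ∃ u v, u ∈ A ∧ v ∉ A ∧ H.Adj u v := by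
  intro a b w
  induction w with
  | nil => intro ha hb; exact absurd ha hb
  | @cons a c b h p ih =>
    intro ha hb
    by_cases hc : c ∈ A
    · exact ih hc hb
    · exact ⟨a, c, ha, hc, h⟩

lemma edgeConn_le_crossing [Fintype V] (G : SimpleGraph V) (A : Finset V)
    (hA : A.Nonempty) (hB : Aᶜ.Nonempty) :
    edgeConnectivity G ≤ crossingEdges G A := by
  obtain ⟨a, ha⟩ := hA
  obtain ⟨b, hb⟩ := hB
  rw [Finset.mem_compl] at hb
  set P := Finset.univ.filter (fun p : V × V => p.1 ∈ A ∧ p.2 ∉ A ∧ G.Adj p.1 p.2) with hP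
  set D := P.image (fun p : V × V => s(p.1, p.2)) with hD
  have hsub : (↑D : Set (Sym2 V)) ⊆ G.edgeSet := by
    intro e he
    simp only [hD, hP, Finset.coe_image, Set.mem_image, Finset.mem_coe,
      Finset.mem_filter, Finset.mem_univ, true_and] at he
    obtain ⟨⟨u, v⟩, ⟨_, _, huv⟩, rfl⟩ := he
    exact huv
  have hdis : ¬ (G.deleteEdges ↑D).Connected := by
    intro hc
    obtain ⟨w⟩ := hc.preconnected a b
    obtain ⟨u, v, hu, hv, huv⟩ := walk_cross w ha hb
    rw [SimpleGraph.deleteEdges_adj] at huv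
    exact huv.2 (by
      simp only [Finset.mem_coe, hD, Finset.mem_image]
      exact ⟨(u, v), by simp [hP, hu, hv, huv.1], rfl⟩)
  have h1 : edgeConnectivity G ≤ D.card :=
    Nat.sInf_le ⟨D, hsub, rfl, hdis⟩
  exact h1.trans (Finset.card_image_le)

theorem stmt6 [Fintype V] (G : SimpleGraph V) :
    min (edgeConnectivity G) (Fintype.card V) ≤ scrambleNumber G := by
  cases isEmpty_or_nonempty V with
  | inl h =>
    have : Fintype.card V = 0 := Fintype.card_eq_zero
    simp [this]
  | inr h =>
    set S : Finset (Finset V) := Finset.univ.image (fun v => ({v} : Finset V)) with hS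
    have hmemS : ∀ E ∈ S, ∃ v, E = {v} := by
      intro E hE
      simp only [hS, Finset.mem_image, Finset.mem_univ, true_and] at hE
      obtain ⟨v, rfl⟩ := hE
      exact ⟨v, rfl⟩
    have hscr : IsScramble G S := by
      constructor
      · exact ⟨{Classical.arbitrary V}, by simp [hS]⟩
      · intro E hE
        obtain ⟨v, rfl⟩ := hmemS E hE
        refine ⟨Finset.singleton_nonempty v, ?_⟩
        rw [SimpleGraph.connected_iff]
        constructor
        · intro x y
          have : x = y := Subtype.ext (by
            have hx := x.2; have hy := y.2
            simp only [Finset.coe_singleton, Set.mem_singleton_iff] at hx hy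
            rw [hx, hy])
          rw [this]
        · exact ⟨⟨v, by simp⟩⟩
    have hhit : (Fintype.card V : ℕ) ≤ hitNum S := by
      refine le_csInf ⟨Fintype.card V, Finset.univ, fun E hE => ?_, Finset.card_univ⟩ ?_
      · obtain ⟨⟨x, hx⟩, -⟩ := hscr.2 E hE
        exact ⟨x, Finset.mem_inter.2 ⟨hx, Finset.mem_univ x⟩⟩
      · rintro k ⟨C, hC, rfl⟩
        have : C = Finset.univ := by
          ext v
          simp only [Finset.mem_univ, iff_true]
          have := hC {v} (by simp [hS])
          obtain ⟨x, hx⟩ := this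
          simp only [Finset.mem_inter, Finset.mem_singleton] at hx
          rw [← hx.1]; exact hx.2
        rw [this, Finset.card_univ]
    have hcut : (edgeConnectivity G : ℕ∞) ≤ cutNum G S := by
      apply le_sInf
      rintro k ⟨A, ⟨E1, hE1, hE1A⟩, ⟨E2, hE2, hE2A⟩, rfl⟩
      obtain ⟨v1, rfl⟩ := hmemS E1 hE1
      obtain ⟨v2, rfl⟩ := hmemS E2 hE2
      have hA : A.Nonempty := ⟨v1, hE1A (Finset.mem_singleton_self v1)⟩
      have hB : Aᶜ.Nonempty := ⟨v2, hE2A (Finset.mem_singleton_self v2)⟩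
      exact_mod_cast edgeConn_le_crossing G A hA hB
    have hord : min (edgeConnectivity G) (Fintype.card V) ≤ scrambleOrder G S := by
      unfold scrambleOrder
      have hle : ((min (edgeConnectivity G) (Fintype.card V) : ℕ) : ℕ∞) ≤
          min (hitNum S : ℕ∞) (cutNum G S) := by
        apply le_min
        · exact le_trans (by exact_mod_cast (min_le_right _ _).trans hhit) le_rfl
        · exact le_trans (by exact_mod_cast min_le_left (edgeConnectivity G) (Fintype.card V)) hcut
      have hne : min (hitNum S : ℕ∞) (cutNum G S) ≠ ⊤ := by
        intro htop
        have := min_le_left (hitNum S : ℕ∞) (cutNum G S)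
        rw [htop] at this
        exact (ENat.coe_ne_top _) (top_le_iff.mp this)
      calc min (edgeConnectivity G) (Fintype.card V)
          = ((min (edgeConnectivity G) (Fintype.card V) : ℕ) : ℕ∞).toNat := by simp
        _ ≤ (min (hitNum S : ℕ∞) (cutNum G S)).toNat := ENat.toNat_le_toNat hle hne
    refine hord.trans (le_csSup ?_ ⟨S, hscr, rfl⟩)
    refine ⟨Fintype.card V, ?_⟩
    rintro k ⟨S', hS', rfl⟩
    unfold scrambleOrder
    have h1 : (min (hitNum S' : ℕ∞) (cutNum G S')).toNat ≤ ((hitNum S' : ℕ∞)).toNat :=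
      ENat.toNat_le_toNat (min_le_left _ _) (ENat.coe_ne_top _)
    rw [ENat.toNat_coe] at h1
    refine h1.trans ?_
    apply Nat.sInf_le
    refine ⟨Finset.univ, ?_, Finset.card_univ⟩
    intro E hE
    obtain ⟨⟨x, hx⟩, -⟩ := hS'.2 E hE
    exact ⟨x, Finset.mem_inter.2 ⟨hx, Finset.mem_univ x⟩⟩
end

section
/- Let G be a simple graph on n vertices with δ(G) ≥ ⌊n/2⌋ + 1. Then sn(G) = gon(G) = n − α(G). -/
open SimpleGraph Finset

attribute [local instance] Classical.propDecidable

variable {V : Type*}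

section MyAux
variable [Fintype V] (G : SimpleGraph V)

lemma my_adj_of_mem {G : SimpleGraph V} {v u : V}
    (h : u ∈ G.neighborFinset v) : G.Adj v u := by
  rwa [SimpleGraph.mem_neighborFinset] at h

lemma my_cross_biUnion (A : Finset V) :
    Finset.univ.filter (fun p : V × V => p.1 ∈ A ∧ p.2 ∉ A ∧ G.Adj p.1 p.2)
      = A.biUnion (fun v => ((G.neighborFinset v) \ A).image (fun u => (v, u))) := by
  ext p
  simp only [Finset.mem_filter, Finset.mem_univ, true_and, Finset.mem_biUnion,
    Finset.mem_image, Finset.mem_sdiff, SimpleGraph.mem_neighborFinset]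
  constructor
  · rintro ⟨h1, h2, h3⟩
    exact ⟨p.1, h1, p.2, ⟨h3, h2⟩, rfl⟩
  · rintro ⟨v, hv, u, ⟨hadj, hu⟩, rfl⟩
    exact ⟨hv, hu, hadj⟩

lemma my_crossingEdges_eq_sum (A : Finset V) :
    crossingEdges G A = ∑ v ∈ A, ((G.neighborFinset v) \ A).card := by
  rw [crossingEdges, my_cross_biUnion, Finset.card_biUnion]
  · refine Finset.sum_congr rfl fun v hv => ?_
    rw [Finset.card_image_of_injective]
    intro a b h
    simpa using h
  · intro x hx y hy hxy
    simp only [Finset.disjoint_left, Finset.mem_image]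
    rintro p ⟨u, hu, rfl⟩ ⟨u', hu', h⟩
    exact hxy (by injection h with h1 h2; exact h1.symm ▸ rfl)

lemma my_crossingEdges_compl (A : Finset V) : crossingEdges G Aᶜ = crossingEdges G A := by
  unfold crossingEdges
  apply Finset.card_bij (fun p _ => p.swap)
  · rintro ⟨a, b⟩ hp
    simp only [Finset.mem_filter, Finset.mem_univ, true_and, Finset.mem_compl, not_not] at hp ⊢
    exact ⟨not_not.mp (by simpa using hp.2.1), by simpa using hp.1, hp.2.2.symm⟩
  · rintro ⟨a, b⟩ ha ⟨c, d⟩ hc h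
    simpa [Prod.ext_iff, and_comm] using congrArg Prod.swap h
  · rintro ⟨a, b⟩ hp
    refine ⟨(b, a), ?_, rfl⟩
    simp only [Finset.mem_filter, Finset.mem_univ, true_and, Finset.mem_compl] at hp ⊢
    exact ⟨by simpa using hp.2.1, by simpa using hp.1, hp.2.2.symm⟩

lemma my_nbrs_outside (A : Finset V) (v : V) (hv : v ∈ A) :
    G.degree v + 1 - A.card ≤ ((G.neighborFinset v) \ A).card := by
  have hveq : (G.neighborFinset v) \ A = (G.neighborFinset v) \ (A.erase v) := by
    ext u
    simp only [Finset.mem_sdiff, Finset.mem_erase, SimpleGraph.mem_neighborFinset]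
    constructor
    · rintro ⟨h1, h2⟩; exact ⟨h1, fun h => h2 h.2⟩
    · rintro ⟨h1, h2⟩; exact ⟨h1, fun h => h2 ⟨(G.ne_of_adj h1).symm, h⟩⟩
  rw [hveq]
  have := Finset.le_card_sdiff (A.erase v) (G.neighborFinset v)
  have hc : (A.erase v).card = A.card - 1 := Finset.card_erase_of_mem hv
  rw [hc] at this
  have hdeg : G.degree v = (G.neighborFinset v).card := rfl
  have hA1 : 1 ≤ A.card := Finset.card_pos.mpr ⟨v, hv⟩
  omega

lemma my_crossing_ge_half (hδ : Fintype.card V / 2 + 1 ≤ G.minDegree) (A : Finset V)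
    (h1 : 2 ≤ A.card) (hhalf : 2 * A.card ≤ Fintype.card V) :
    Fintype.card V - 1 ≤ crossingEdges G A := by
  have hsum : A.card * (Fintype.card V / 2 + 2 - A.card) ≤ crossingEdges G A := by
    rw [my_crossingEdges_eq_sum]
    calc A.card * (Fintype.card V / 2 + 2 - A.card)
        = ∑ _v ∈ A, (Fintype.card V / 2 + 2 - A.card) := by
          rw [Finset.sum_const, smul_eq_mul]
      _ ≤ ∑ v ∈ A, ((G.neighborFinset v) \ A).card := by
          refine Finset.sum_le_sum fun v hv => ?_
          have h2 := my_nbrs_outside G A v hv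
          have h3 : G.minDegree ≤ G.degree v := G.minDegree_le_degree v
          omega
  have harith : Fintype.card V - 1 ≤ A.card * (Fintype.card V / 2 + 2 - A.card) := by
    set n := Fintype.card V
    set a := A.card
    set m := n / 2
    have hm : 2 * m ≤ n ∧ n ≤ 2 * m + 1 := by constructor <;> omega
    have ham : a ≤ m := by omega
    have key : 2 * m ≤ a * (m + 2 - a) := by
      zify [show a ≤ m + 2 by omega]
      nlinarith [mul_nonneg (by omega : (0:ℤ) ≤ (a:ℤ) - 2) (by omega : (0:ℤ) ≤ (m:ℤ) - (a:ℤ))]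
    omega
  omega

lemma my_sum_pairs (s : Finset V) (F : V → V → ℤ) :
    ∑ p ∈ Finset.univ.filter (fun p : V × V => p.1 ∈ s ∧ G.Adj p.1 p.2), F p.1 p.2
      = ∑ v ∈ s, ∑ u ∈ G.neighborFinset v, F v u := by
  have hrep : Finset.univ.filter (fun p : V × V => p.1 ∈ s ∧ G.Adj p.1 p.2)
      = s.biUnion (fun v => (G.neighborFinset v).image (fun u => (v, u))) := by
    ext p
    simp only [Finset.mem_filter, Finset.mem_univ, true_and, Finset.mem_biUnion,
      Finset.mem_image, SimpleGraph.mem_neighborFinset]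
    constructor
    · rintro ⟨h1, h2⟩
      exact ⟨p.1, h1, p.2, h2, rfl⟩
    · rintro ⟨v, hv, u, hu, rfl⟩
      exact ⟨hv, hu⟩
  rw [hrep, Finset.sum_biUnion]
  · refine Finset.sum_congr rfl fun v hv => ?_
    rw [Finset.sum_image (by intro a _ b _ h; injection h with _ h2)]
  · intro x hx y hy hxy
    simp only [Finset.disjoint_left, Finset.mem_image]
    rintro p ⟨u, hu, rfl⟩ ⟨u', hu', h⟩
    exact hxy (by injection h with h1 h2; exact h1.symm ▸ rfl)

lemma my_sum_lap_mul (s : Finset V) (f w : V → ℤ) :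
    ∑ v ∈ s, lapAt G f v * w v
      = ∑ p ∈ Finset.univ.filter (fun p : V × V => p.1 ∈ s ∧ G.Adj p.1 p.2),
          (f p.1 - f p.2) * w p.1 := by
  rw [my_sum_pairs G s (fun a b => (f a - f b) * w a)]
  refine Finset.sum_congr rfl fun v hv => ?_
  rw [lapAt, Finset.sum_mul]

lemma my_sum_lap (s : Finset V) (f : V → ℤ) :
    ∑ v ∈ s, lapAt G f v
      = ∑ p ∈ Finset.univ.filter (fun p : V × V => p.1 ∈ s ∧ G.Adj p.1 p.2),
          (f p.1 - f p.2) := by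
  rw [my_sum_pairs G s (fun a b => (f a - f b))]
  refine Finset.sum_congr rfl fun v hv => ?_
  rw [lapAt]

lemma my_sum_sym_zero (A : Finset V) (f : V → ℤ) :
    ∑ p ∈ Finset.univ.filter (fun p : V × V => (p.1 ∈ A ∧ G.Adj p.1 p.2) ∧ p.2 ∈ A),
      (f p.1 - f p.2) = 0 := by
  refine Finset.sum_involution (fun p _ => p.swap) ?_ ?_ ?_ ?_
  · intro p hp
    simp only [Prod.fst_swap, Prod.snd_swap]
    ring
  · intro p hp hne h
    apply hne
    have h2 : p.2 = p.1 := by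
      have := congrArg Prod.fst h
      simpa using this
    show f p.1 - f p.2 = 0
    rw [h2]
    ring
  · intro p hp
    simp only [Finset.mem_filter, Finset.mem_univ, true_and, Prod.fst_swap,
      Prod.snd_swap] at hp ⊢
    exact ⟨⟨hp.2, hp.1.2.symm⟩, hp.1.1⟩
  · intro p hp
    simp

lemma my_sum_lap_cross (A : Finset V) (f : V → ℤ) :
    ∑ v ∈ A, lapAt G f v
      = ∑ p ∈ Finset.univ.filter (fun p : V × V => p.1 ∈ A ∧ p.2 ∉ A ∧ G.Adj p.1 p.2),
          (f p.1 - f p.2) := by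
  rw [my_sum_lap]
  rw [← Finset.sum_filter_add_sum_filter_not
    (Finset.univ.filter (fun p : V × V => p.1 ∈ A ∧ G.Adj p.1 p.2))
    (fun p => p.2 ∈ A) (fun p => f p.1 - f p.2)]
  rw [Finset.filter_filter, Finset.filter_filter]
  rw [show (Finset.univ.filter fun p : V × V => (p.1 ∈ A ∧ G.Adj p.1 p.2) ∧ p.2 ∈ A).sum
        (fun p => f p.1 - f p.2) = 0 from my_sum_sym_zero G A f]
  rw [zero_add]
  apply Finset.sum_congr
  · apply Finset.filter_congr
    intro p _
    tauto
  · intros; rfl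

lemma my_lap_total (f : V → ℤ) : ∑ v, lapAt G f v = 0 := by
  have := my_sum_lap_cross G Finset.univ f
  simp only [Finset.mem_univ, not_true_eq_false, false_and, and_false] at this
  simpa using this

lemma my_superlevel_bound (f : V → ℤ) (t : ℤ) :
    (crossingEdges G (Finset.univ.filter (fun v => t ≤ f v)) : ℤ)
      ≤ ∑ v ∈ Finset.univ.filter (fun v => t ≤ f v), lapAt G f v := by
  rw [my_sum_lap_cross, crossingEdges]
  have := Finset.card_nsmul_le_sum
    (Finset.univ.filter (fun p : V × V => p.1 ∈ Finset.univ.filter (fun v => t ≤ f v) ∧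
      p.2 ∉ Finset.univ.filter (fun v => t ≤ f v) ∧ G.Adj p.1 p.2))
    (fun p => f p.1 - f p.2) 1 ?_
  · simpa using this
  · intro p hp
    simp only [Finset.mem_filter, Finset.mem_univ, true_and] at hp
    obtain ⟨h1, h2, -⟩ := hp
    have h3 : ¬ t ≤ f p.2 := h2
    show (1 : ℤ) ≤ f p.1 - f p.2
    omega

lemma my_lap_add (f g : V → ℤ) (v : V) :
    lapAt G (fun u => f u + g u) v = lapAt G f v + lapAt G g v := by
  unfold lapAt
  rw [← Finset.sum_add_distrib]
  apply Finset.sum_congr rfl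
  intros; ring

lemma my_lap_neg (f : V → ℤ) (v : V) : lapAt G (fun u => - f u) v = - lapAt G f v := by
  unfold lapAt
  rw [← Finset.sum_neg_distrib]
  apply Finset.sum_congr rfl
  intros; ring

lemma my_linEquiv_symm {D D' : V → ℤ} (h : LinEquiv G D D') : LinEquiv G D' D := by
  obtain ⟨f, hf⟩ := h
  exact ⟨fun v => - f v, fun v => by rw [my_lap_neg G f v, ← hf v]; ring⟩

lemma my_linEquiv_trans {D D' D'' : V → ℤ} (h : LinEquiv G D D') (h' : LinEquiv G D' D'') :
    LinEquiv G D D'' := by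
  obtain ⟨f, hf⟩ := h
  obtain ⟨g, hg⟩ := h'
  exact ⟨fun v => f v + g v, fun v => by rw [my_lap_add G f g v, ← hf v, ← hg v]; ring⟩

lemma my_linEquiv_deg {D D' : V → ℤ} (h : LinEquiv G D D') : degDiv D = degDiv D' := by
  obtain ⟨f, hf⟩ := h
  have : ∑ v, (D v - D' v) = ∑ v, lapAt G f v := Finset.sum_congr rfl fun v _ => hf v
  rw [my_lap_total] at this
  rw [Finset.sum_sub_distrib] at this
  unfold degDiv
  omega

lemma my_pr_transfer {D₀ D : V → ℤ} (hPR : PositiveRank G D₀) (hDD : LinEquiv G D₀ D)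
    (x : V) : ∃ D'', Effective D'' ∧ LinEquiv G D D'' ∧ 1 ≤ D'' x := by
  obtain ⟨E, hEeff, hEequiv⟩ := hPR x
  refine ⟨fun v => E v + (if v = x then 1 else 0), fun v => by
      have := hEeff v; dsimp only; split <;> omega, ?_, by simpa using hEeff x⟩
  apply my_linEquiv_trans G (my_linEquiv_symm G hDD)
  obtain ⟨f, hf⟩ := hEequiv
  refine ⟨f, fun v => ?_⟩
  have := hf v
  dsimp only at this ⊢
  omega

lemma my_connected (hδ2 : Fintype.card V + 1 ≤ 2 * G.minDegree) [Nonempty V] :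
    G.Connected := by
  rw [SimpleGraph.connected_iff_exists_forall_reachable]
  obtain ⟨v⟩ := ‹Nonempty V›
  refine ⟨v, fun w => ?_⟩
  by_cases hvw : v = w
  · subst hvw; exact SimpleGraph.Reachable.refl v
  by_cases hadj : G.Adj v w
  · exact hadj.reachable
  -- common neighbor
  have hcap : (G.neighborFinset v ∩ G.neighborFinset w).Nonempty := by
    by_contra hemp
    rw [Finset.not_nonempty_iff_eq_empty] at hemp
    have hunion := Finset.card_union_of_disjoint (Finset.disjoint_iff_inter_eq_empty.mpr hemp)
    have h1 : (G.neighborFinset v ∪ G.neighborFinset w).card ≤ Fintype.card V :=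
      Finset.card_le_card (Finset.subset_univ _) |>.trans_eq (Finset.card_univ)
    have hv' : G.minDegree ≤ G.degree v := G.minDegree_le_degree v
    have hw' : G.minDegree ≤ G.degree w := G.minDegree_le_degree w
    have hdv : G.degree v = (G.neighborFinset v).card := rfl
    have hdw : G.degree w = (G.neighborFinset w).card := rfl
    omega
  obtain ⟨u, hu⟩ := hcap
  simp only [Finset.mem_inter, SimpleGraph.mem_neighborFinset] at hu
  exact (hu.1.reachable).trans hu.2.symm.reachable

lemma my_dist_pred (hconn : G.Connected) (q v : V) (h : 1 ≤ G.dist q v) :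
    ∃ u, G.Adj v u ∧ G.dist q u + 1 = G.dist q v := by
  obtain ⟨p, hp⟩ := (hconn q v).exists_walk_length_eq_dist
  generalize hq : p.reverse = pr
  cases pr with
  | nil =>
    exfalso
    have hlen := congrArg SimpleGraph.Walk.length hq
    rw [SimpleGraph.Walk.length_reverse] at hlen
    simp only [SimpleGraph.Walk.length_nil] at hlen
    omega
  | @cons _ u _ hadj rest =>
    refine ⟨u, hadj, ?_⟩
    have hlen := congrArg SimpleGraph.Walk.length hq
    rw [SimpleGraph.Walk.length_reverse] at hlen
    simp only [SimpleGraph.Walk.length_cons] at hlen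
    -- dist q u ≤ rest.length
    have h1 : G.dist q u ≤ rest.length := by
      have := SimpleGraph.dist_le rest.reverse
      simpa using this
    -- dist q v ≤ dist q u + 1
    have h2 : G.dist q v ≤ G.dist q u + 1 := by
      obtain ⟨p2, hp2⟩ := (hconn q u).exists_walk_length_eq_dist
      have := SimpleGraph.dist_le (p2.concat hadj.symm)
      rw [SimpleGraph.Walk.length_concat, hp2] at this
      exact this
    omega

def NoLegal [Fintype V] (G : SimpleGraph V) (q : V) (D : V → ℤ) : Prop :=
  ∀ A : Finset V, A.Nonempty → q ∉ A →
    ∃ v ∈ A, D v < (((G.neighborFinset v) \ A).card : ℤ)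

lemma my_lap_indicator_mem (A : Finset V) (v : V) (hv : v ∈ A) :
    lapAt G (fun u => if u ∈ A then (1:ℤ) else 0) v = (((G.neighborFinset v) \ A).card : ℤ) := by
  unfold lapAt
  have : ∀ u ∈ G.neighborFinset v,
      ((if v ∈ A then (1:ℤ) else 0) - (if u ∈ A then (1:ℤ) else 0))
        = if u ∉ A then (1:ℤ) else 0 := by
    intro u hu
    simp only [hv, if_true]
    by_cases h : u ∈ A <;> simp [h]
  rw [Finset.sum_congr rfl this, Finset.sum_boole, Finset.sdiff_eq_filter]

lemma my_lap_indicator_nonmem (A : Finset V) (v : V) (hv : v ∉ A) :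
    lapAt G (fun u => if u ∈ A then (1:ℤ) else 0) v ≤ 0 := by
  unfold lapAt
  apply Finset.sum_nonpos
  intro u hu
  simp only [hv, if_false]
  by_cases h : u ∈ A <;> simp [h]

lemma my_dist_lt_card (hconn : G.Connected) (q v : V) : G.dist q v < Fintype.card V := by
  obtain ⟨p, hp⟩ := (hconn q v).exists_walk_length_eq_dist
  have h1 := SimpleGraph.dist_le (p.toPath : G.Walk q v)
  have h2 : ((p.toPath : G.Walk q v)).IsPath := p.toPath.2
  have := h2.length_lt
  omega

lemma my_stage1 [Nonempty V] (hconn : G.Connected) {D₀ : V → ℤ}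
    (hPR : PositiveRank G D₀) (q : V) :
    ∃ D, Effective D ∧ LinEquiv G D₀ D ∧ 1 ≤ D q ∧ NoLegal G q D := by
  classical
  set n := Fintype.card V with hn
  set M : ℤ := ((n : ℤ))^2 + 2 with hM
  have hM1 : 1 ≤ M := by
    have : (0:ℤ) ≤ (n:ℤ)^2 := sq_nonneg _
    omega
  set w : V → ℤ := fun v => M ^ (n - G.dist q v) with hw
  have hwpos : ∀ v, 0 < w v := fun v => pow_pos (by omega) _
  set Dq : V → ℤ := fun v => D₀ v - if v = q then 1 else 0 with hDq
  set P : ℤ → Prop := fun z => ∃ E : V → ℤ,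
    Effective E ∧ LinEquiv G Dq E ∧ ∑ v, E v * w v = z with hP
  have hPinh : ∃ z, P z := by
    obtain ⟨E₀, h1, h2⟩ := hPR q
    exact ⟨_, E₀, h1, h2, rfl⟩
  have hPbdd : ∃ b, ∀ z, P z → z ≤ b := by
    refine ⟨(degDiv Dq) * M ^ n, ?_⟩
    rintro z ⟨E, hEeff, hEeq, rfl⟩
    have hEdeg : degDiv E = degDiv Dq := (my_linEquiv_deg G hEeq).symm
    calc ∑ v, E v * w v ≤ ∑ v, E v * M ^ n := by
          apply Finset.sum_le_sum
          intro v _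
          have h1 : w v ≤ M ^ n := pow_le_pow_right₀ hM1 (by omega)
          exact mul_le_mul_of_nonneg_left h1 (hEeff v)
      _ = degDiv E * M ^ n := by rw [degDiv, Finset.sum_mul]
      _ = degDiv Dq * M ^ n := by rw [hEdeg]
  obtain ⟨zmax, ⟨E, hEeff, hEeq, hEz⟩, hmax⟩ := Int.exists_greatest_of_bdd hPbdd hPinh
  -- Claim: E admits no legal firing avoiding q
  have hnolegal : ∀ A : Finset V, A.Nonempty → q ∉ A →
      ∃ v ∈ A, E v < (((G.neighborFinset v) \ A).card : ℤ) := by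
    intro A hAne hqA
    by_contra hcon
    push_neg at hcon
    -- legal firing
    set h : V → ℤ := fun u => if u ∈ A then (1:ℤ) else 0 with hh
    set E' : V → ℤ := fun v => E v - lapAt G h v with hE'
    have hE'eff : Effective E' := by
      intro v
      by_cases hv : v ∈ A
      · have h1 := hcon v hv
        simp only [hE', hh]
        rw [my_lap_indicator_mem G A v hv]
        omega
      · have h1 := my_lap_indicator_nonmem G A v hv
        have h2 := hEeff v
        simp only [hE', hh]
        omega
    have hE'eq : LinEquiv G Dq E' :=
      my_linEquiv_trans G hEeq ⟨h, fun v => by simp only [hE']; ring⟩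
    -- Phi difference
    set Cr := Finset.univ.filter (fun p : V × V => p.1 ∈ A ∧ p.2 ∉ A ∧ G.Adj p.1 p.2) with hCr
    have hdiff : ∑ v, E' v * w v - ∑ v, E v * w v
        = ∑ p ∈ Cr, (w p.2 - w p.1) := by
      have e1 : ∑ v, E' v * w v - ∑ v, E v * w v = -∑ v, lapAt G h v * w v := by
        rw [← Finset.sum_sub_distrib, ← Finset.sum_neg_distrib]
        apply Finset.sum_congr rfl
        intro v _
        simp only [hE']
        ring
      rw [e1, my_sum_lap_mul G Finset.univ h w]
      have e2 : ∀ p ∈ Finset.univ.filter (fun p : V × V => p.1 ∈ Finset.univ ∧ G.Adj p.1 p.2),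
          (h p.1 - h p.2) * w p.1
            = (if p.1 ∈ A ∧ p.2 ∉ A then w p.1 else 0)
              - (if p.2 ∈ A ∧ p.1 ∉ A then w p.1 else 0) := by
        intro p _
        simp only [hh]
        by_cases h1 : p.1 ∈ A <;> by_cases h2 : p.2 ∈ A <;> simp [h1, h2]
      rw [Finset.sum_congr rfl e2, Finset.sum_sub_distrib]
      rw [← Finset.sum_filter, ← Finset.sum_filter]
      rw [Finset.filter_filter, Finset.filter_filter]
      have e3 : Finset.univ.filter
            (fun p : V × V => (p.1 ∈ Finset.univ ∧ G.Adj p.1 p.2) ∧ p.1 ∈ A ∧ p.2 ∉ A) = Cr := by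
        ext p
        have h0 : p.1 ∈ (Finset.univ : Finset V) := Finset.mem_univ _
        simp only [hCr, Finset.mem_filter, Finset.mem_univ, true_and]
        tauto
      have e4 : Finset.univ.filter
            (fun p : V × V => (p.1 ∈ Finset.univ ∧ G.Adj p.1 p.2) ∧ p.2 ∈ A ∧ p.1 ∉ A)
          = Cr.image Prod.swap := by
        ext p
        have h0 : p.1 ∈ (Finset.univ : Finset V) := Finset.mem_univ _
        simp only [hCr, Finset.mem_filter, Finset.mem_image, Finset.mem_univ, true_and]
        constructor
        · rintro ⟨hadj, h2, h1⟩
          exact ⟨p.swap, ⟨h2, h1, hadj.symm⟩, by simp⟩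
        · rintro ⟨r, ⟨h1, h2, hadj⟩, rfl⟩
          simp only [Prod.fst_swap, Prod.snd_swap]
          exact ⟨hadj.symm, h1, h2⟩
      rw [e3, e4]
      have hinj : ∀ a ∈ Cr, ∀ b ∈ Cr, Prod.swap a = Prod.swap b → a = b := by
        intro a _ b _ hab
        have := congrArg Prod.swap hab
        simpa using this
      rw [Finset.sum_image hinj]
      simp only [Prod.fst_swap]
      rw [neg_sub, ← Finset.sum_sub_distrib]
    -- nonemptiness and positivity of the difference
    obtain ⟨vs, hvsA, hvsmin⟩ := Finset.exists_min_image A (fun v => G.dist q v) hAne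
    have hvsq : vs ≠ q := fun h => hqA (h ▸ hvsA)
    have hd1 : 1 ≤ G.dist q vs := by
      rcases Nat.eq_zero_or_pos (G.dist q vs) with h | h
      · exact absurd ((hconn.dist_eq_zero_iff).mp h).symm hvsq
      · omega
    obtain ⟨us, hadj, hdist⟩ := my_dist_pred G hconn q vs hd1
    have husA : us ∉ A := by
      intro hmem
      have := hvsmin us hmem
      omega
    set ps : V × V := (vs, us) with hps
    have hpsCr : ps ∈ Cr := by
      simp only [hCr, Finset.mem_filter, Finset.mem_univ, true_and]
      exact ⟨hvsA, husA, hadj⟩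
    set ds : ℕ := G.dist q vs with hds
    have hdsn : ds < n := my_dist_lt_card G hconn q vs
    have hterm : w us - w vs = M ^ (n - ds) * (M - 1) := by
      have h1 : n - G.dist q us = (n - ds) + 1 := by omega
      simp only [hw, h1]
      rw [pow_succ]
      ring
    have hothers : ∀ p ∈ Cr.erase ps, -(M ^ (n - ds)) ≤ w p.2 - w p.1 := by
      intro p hp
      have hpCr := Finset.mem_of_mem_erase hp
      simp only [hCr, Finset.mem_filter, Finset.mem_univ, true_and] at hpCr
      have h1 : ds ≤ G.dist q p.1 := hvsmin p.1 hpCr.1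
      have h2 : w p.1 ≤ M ^ (n - ds) := pow_le_pow_right₀ hM1 (by omega)
      have h3 : 0 < w p.2 := hwpos p.2
      omega
    have hcardCr : Cr.card ≤ n^2 := by
      calc Cr.card ≤ Fintype.card (V × V) := Finset.card_le_univ Cr
        _ = n^2 := by rw [Fintype.card_prod]; ring
    have hpos : 0 < ∑ p ∈ Cr, (w p.2 - w p.1) := by
      rw [← Finset.add_sum_erase Cr _ hpsCr]
      have hsum2 := Finset.card_nsmul_le_sum (Cr.erase ps) (fun p => w p.2 - w p.1)
        (-(M ^ (n - ds))) hothers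
      have hcard' : (Cr.erase ps).card = Cr.card - 1 := Finset.card_erase_of_mem hpsCr
      have hcard'' : ((Cr.erase ps).card : ℤ) ≤ (n:ℤ)^2 - 1 := by
        have h0 : 1 ≤ Cr.card := Finset.card_pos.mpr ⟨ps, hpsCr⟩
        have : ((Cr.erase ps).card : ℤ) = (Cr.card : ℤ) - 1 := by
          rw [hcard']; push_cast [h0]; omega
        rw [this]
        have : (Cr.card : ℤ) ≤ (n:ℤ)^2 := by exact_mod_cast hcardCr
        omega
      rw [nsmul_eq_mul] at hsum2
      have hMn : (1:ℤ) ≤ M ^ (n - ds) := one_le_pow₀ hM1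
      have : ((Cr.erase ps).card : ℤ) * (-(M ^ (n - ds))) ≥ ((n:ℤ)^2 - 1) * (-(M ^ (n-ds))) := by
        apply mul_le_mul_of_nonpos_right hcard''
        omega
      replace hterm : w ps.2 - w ps.1 = M ^ (n - ds) * (M - 1) := hterm
      rw [hterm]
      nlinarith [hsum2, this]
    -- contradiction with maximality
    have hmem : P (∑ v, E' v * w v) := ⟨E', hE'eff, hE'eq, rfl⟩
    have := hmax _ hmem
    omega
  -- final divisor
  refine ⟨fun v => E v + (if v = q then 1 else 0), ?_, ?_, by simpa using hEeff q, ?_⟩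
  · intro v
    have := hEeff v
    dsimp only
    split <;> omega
  · obtain ⟨f, hf⟩ := hEeq
    refine ⟨f, fun v => ?_⟩
    have := hf v
    simp only [hDq] at this
    dsimp only
    omega
  · intro A hAne hqA
    obtain ⟨v, hvA, hv⟩ := hnolegal A hAne hqA
    refine ⟨v, hvA, ?_⟩
    have hvq : v ≠ q := fun h => hqA (h ▸ hvA)
    simp only [hvq, if_false]
    omega

lemma my_crossing_big (hδ : Fintype.card V / 2 + 1 ≤ G.minDegree) (A : Finset V)
    (h1 : 2 ≤ A.card) (h2 : A.card + 2 ≤ Fintype.card V) :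
    Fintype.card V - 1 ≤ crossingEdges G A := by
  by_cases hc : 2 * A.card ≤ Fintype.card V
  · exact my_crossing_ge_half G hδ A h1 hc
  · have h3 : (Aᶜ).card = Fintype.card V - A.card := Finset.card_compl A
    have h4 : A.card ≤ Fintype.card V := Finset.card_le_univ A
    rw [← my_crossingEdges_compl]
    exact my_crossing_ge_half G hδ Aᶜ (by omega) (by omega)

lemma my_card_ge_three [Nonempty V] (hδ : Fintype.card V / 2 + 1 ≤ G.minDegree) :
    3 ≤ Fintype.card V := by
  obtain ⟨v⟩ := ‹Nonempty V›
  have h1 : G.minDegree ≤ G.degree v := G.minDegree_le_degree v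
  have h2 : G.degree v < Fintype.card V := G.degree_lt_card_verts v
  omega

lemma my_key [Nonempty V] (hδ : Fintype.card V / 2 + 1 ≤ G.minDegree)
    {D₀ D : V → ℤ} (hPR : PositiveRank G D₀) (hDeff : Effective D)
    (hequiv : LinEquiv G D₀ D) {d : ℕ}
    (hdeg : degDiv D = (d : ℤ))
    (hd : d + 2 ≤ Fintype.card V)
    (q : V) (hNL : NoLegal G q D)
    (x y : V) (hxy : G.Adj x y) (hx : D x = 0) (hy : D y = 0) :
    (G.degree q : ℤ) ≤ D q ∧
      (¬ G.Adj q x → ∀ v, G.Adj x v → ¬ G.Adj q v → 1 ≤ D v) := by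
  classical
  set n := Fintype.card V with hn
  have hn3 : 3 ≤ n := my_card_ge_three G hδ
  obtain ⟨D'', hD''eff, hD''eq, hD''x⟩ := my_pr_transfer G hPR hequiv x
  obtain ⟨f, hf⟩ := hD''eq
  have hDlap : ∀ v, lapAt G f v ≤ D v := fun v => by
    have h1 := hD''eff v; have h2 := hf v; omega
  have hlapx : lapAt G f x ≤ -1 := by have := hf x; omega
  have hDsum : ∀ s : Finset V, ∑ v ∈ s, D v ≤ (d : ℤ) := by
    intro s
    rw [← hdeg, degDiv]
    exact Finset.sum_le_sum_of_subset_of_nonneg (Finset.subset_univ s)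
      (fun v _ _ => hDeff v)
  have hDle : ∀ v, D v ≤ (d : ℤ) := by
    intro v
    have h1 : D v ≤ ∑ u ∈ {v}, D u := by simp
    exact h1.trans (hDsum {v})
  -- good threshold cut gives a contradiction
  by_cases hgood : ∃ t : ℤ, 2 ≤ (Finset.univ.filter (fun v => t ≤ f v)).card ∧
      (Finset.univ.filter (fun v => t ≤ f v)).card + 2 ≤ n
  · exfalso
    obtain ⟨t, h1, h2⟩ := hgood
    have hc := my_crossing_big G hδ _ h1 h2
    have hc2 := my_superlevel_bound G f t
    have hc3 := hDsum (Finset.univ.filter (fun v => t ≤ f v))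
    have hc4 : ∑ v ∈ Finset.univ.filter (fun v => t ≤ f v), lapAt G f v
        ≤ ∑ v ∈ Finset.univ.filter (fun v => t ≤ f v), D v :=
      Finset.sum_le_sum (fun v _ => hDlap v)
    have hc5 : ((n : ℤ) - 1) ≤ (crossingEdges G (Finset.univ.filter (fun v => t ≤ f v)) : ℤ) := by
      have : ((n - 1 : ℕ) : ℤ) ≤ (crossingEdges G (Finset.univ.filter (fun v => t ≤ f v)) : ℤ) :=
        by exact_mod_cast hc
      push_cast at this
      omega
    omega
  push_neg at hgood
  -- max analysis
  obtain ⟨z, -, hzmax⟩ := Finset.exists_max_image Finset.univ f Finset.univ_nonempty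
  set Mv := f z with hMv
  set P := Finset.univ.filter (fun v => Mv ≤ f v) with hP
  have hzP : z ∈ P := by simp [hP, hMv]
  -- x is not a max
  have hxlt : ∃ u ∈ G.neighborFinset x, f x < f u := by
    by_contra hcc
    push_neg at hcc
    have : 0 ≤ lapAt G f x :=
      Finset.sum_nonneg (fun u hu => by have := hcc u hu; omega)
    omega
  have hxP : x ∉ P := by
    obtain ⟨u, hu, hult⟩ := hxlt
    simp only [hP, Finset.mem_filter, Finset.mem_univ, true_and]
    have := hzmax u (Finset.mem_univ u)
    omega
  have hPlt : P.card < n := by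
    have : P ⊂ Finset.univ := ⟨Finset.subset_univ P, fun hsub => hxP (hsub (Finset.mem_univ x))⟩
    have := Finset.card_lt_card this
    rwa [Finset.card_univ] at this
  have hPcard : P.card = 1 ∨ P.card = n - 1 := by
    have h1 : 1 ≤ P.card := Finset.card_pos.mpr ⟨z, hzP⟩
    by_cases hc2 : 2 ≤ P.card
    · have h := hgood Mv
      rw [← hP] at h
      have := h hc2
      right; omega
    · left; omega
  rcases hPcard with hP1 | hPn1
  · -- CASE: unique max z
    have hPz : P = {z} := by
      obtain ⟨a, ha⟩ := Finset.card_eq_one.mp hP1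
      rw [ha] at hzP ⊢
      simp only [Finset.mem_singleton] at hzP
      rw [hzP]
    have hflt : ∀ v, v ≠ z → f v < Mv := by
      intro v hv
      by_contra hcc
      push_neg at hcc
      have hvP : v ∈ P := by
        simp only [hP, Finset.mem_filter, Finset.mem_univ, true_and]
        exact hcc
      rw [hPz] at hvP
      simp only [Finset.mem_singleton] at hvP
      exact hv hvP
    have hne2 : (Finset.univ.erase z).Nonempty := by
      rw [← Finset.card_pos, Finset.card_erase_of_mem (Finset.mem_univ z), Finset.card_univ]
      omega
    obtain ⟨v₀, hv₀mem, hv₀max⟩ := Finset.exists_max_image (Finset.univ.erase z) f hne2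
    set c := f v₀ with hcdef
    have hv₀z : v₀ ≠ z := (Finset.mem_erase.mp hv₀mem).1
    have hcM : c < Mv := hflt v₀ hv₀z
    have hsecond : ∀ v, v ≠ z → f v ≤ c := fun v hv =>
      hv₀max v (Finset.mem_erase.mpr ⟨hv, Finset.mem_univ v⟩)
    have hlapz : (G.degree z : ℤ) * (Mv - c) ≤ lapAt G f z := by
      unfold lapAt
      have hterm : ∀ u ∈ G.neighborFinset z, Mv - c ≤ f z - f u := by
        intro u hu
        have huz : u ≠ z := (my_adj_of_mem hu).ne'
        have := hsecond u huz
        omega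
      have := Finset.card_nsmul_le_sum (G.neighborFinset z) (fun u => f z - f u)
        (Mv - c) hterm
      rw [nsmul_eq_mul] at this
      exact this
    have hMc1' : 1 ≤ Mv - c := by omega
    have hDz : (G.degree z : ℤ) ≤ D z := by
      have h1 : (G.degree z : ℤ) * 1 ≤ (G.degree z : ℤ) * (Mv - c) :=
        mul_le_mul_of_nonneg_left hMc1' (Nat.cast_nonneg _)
      have h2 := hDlap z
      linarith
    have hzq : z = q := by
      by_contra hzq
      obtain ⟨v, hv, hlt⟩ := hNL {z} ⟨z, Finset.mem_singleton_self z⟩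
        (by simp only [Finset.mem_singleton]; exact fun h => hzq h.symm)
      simp only [Finset.mem_singleton] at hv
      subst hv
      have hsd : (G.neighborFinset v) \ {v} = G.neighborFinset v := by
        ext u
        simp only [Finset.mem_sdiff, Finset.mem_singleton]
        exact ⟨fun h => h.1, fun h => ⟨h, (my_adj_of_mem h).ne'⟩⟩
      rw [hsd] at hlt
      have : (G.degree v : ℤ) = ((G.neighborFinset v).card : ℤ) := rfl
      omega
    refine ⟨by rw [← hzq]; exact hDz, ?_⟩
    -- Mv - c = 1
    have hMc1 : Mv - c = 1 := by
      by_contra h2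
      have h3 : 2 ≤ Mv - c := by omega
      have h4 : (G.degree z : ℤ) * 2 ≤ (G.degree z : ℤ) * (Mv - c) :=
        mul_le_mul_of_nonneg_left h3 (Nat.cast_nonneg _)
      have h5 : (G.minDegree : ℤ) ≤ (G.degree z : ℤ) := by
        exact_mod_cast G.minDegree_le_degree z
      have h6 : (n : ℤ) + 1 ≤ 2 * (G.minDegree : ℤ) := by
        have : n + 1 ≤ 2 * G.minDegree := by omega
        exact_mod_cast this
      have h7 := hDle z
      have h8 : (d : ℤ) ≤ (n : ℤ) - 2 := by
        have : (d : ℤ) + 2 ≤ (n : ℤ) := by exact_mod_cast hd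
        omega
      have h9 := hDlap z
      linarith
    intro hqx v hxv hqv
    rw [← hzq] at hqx hqv
    -- f x < c
    obtain ⟨u, hu, hult⟩ := hxlt
    have huz : u ≠ z := by
      intro h
      subst h
      exact hqx (my_adj_of_mem hu).symm
    have hfxc : f x < c := lt_of_lt_of_le hult (hsecond u huz)
    set A2 := Finset.univ.filter (fun v => c ≤ f v) with hA2
    have hzA2 : z ∈ A2 := by
      simp only [hA2, Finset.mem_filter, Finset.mem_univ, true_and]
      omega
    have hv₀A2 : v₀ ∈ A2 := by
      simp only [hA2, Finset.mem_filter, Finset.mem_univ, true_and]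
      exact hcdef.le
    have hxA2 : x ∉ A2 := by
      simp only [hA2, Finset.mem_filter, Finset.mem_univ, true_and]
      omega
    have hA2two : 2 ≤ A2.card :=
      Finset.one_lt_card.mpr ⟨z, hzA2, v₀, hv₀A2, Ne.symm hv₀z⟩
    have hA2lt : A2.card < n := by
      have h1 : A2 ⊂ Finset.univ :=
        ⟨Finset.subset_univ A2, fun hsub => hxA2 (hsub (Finset.mem_univ x))⟩
      have := Finset.card_lt_card h1
      rwa [Finset.card_univ] at this
    have hA2n1 : A2.card = n - 1 := by
      have h := hgood c
      rw [← hA2] at h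
      have := h hA2two
      omega
    have hA2c : A2ᶜ = {x} := by
      have hccard : (A2ᶜ).card = 1 := by
        rw [Finset.card_compl]
        omega
      obtain ⟨a, ha⟩ := Finset.card_eq_one.mp hccard
      have hxc : x ∈ A2ᶜ := Finset.mem_compl.mpr hxA2
      rw [ha] at hxc ⊢
      simp only [Finset.mem_singleton] at hxc
      rw [hxc]
    have hfeq : ∀ u, u ≠ x → u ≠ z → f u = c := by
      intro u hux huq
      have h1 : u ∈ A2 := by
        by_contra hcc
        have : u ∈ A2ᶜ := Finset.mem_compl.mpr hcc
        rw [hA2c] at this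
        simp only [Finset.mem_singleton] at this
        exact hux this
      have h2 : c ≤ f u := (Finset.mem_filter.mp h1).2
      have h3 : f u ≤ c := hsecond u huq
      omega
    have hvx : v ≠ x := hxv.ne'
    have hvz : v ≠ z := by
      intro h
      subst h
      exact hqx hxv.symm
    have hfv : f v = c := hfeq v hvx hvz
    have hmemx : x ∈ G.neighborFinset v := by
      rw [SimpleGraph.mem_neighborFinset]
      exact hxv.symm
    have hlapv : lapAt G f v = c - f x := by
      unfold lapAt
      have := Finset.sum_eq_single_of_mem x hmemx (f := fun u => f v - f u) ?_
      · rw [this, hfv]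
      · intro u hu hux
        have huv : G.Adj v u := my_adj_of_mem hu
        have huq : u ≠ z := by
          intro h
          subst h
          exact hqv huv.symm
        show f v - f u = 0
        rw [hfeq u hux huq, hfv]
        ring
    have := hDlap v
    omega
  · -- CASE: co-singleton max set; impossible
    exfalso
    have hxcompl : x ∈ Pᶜ := Finset.mem_compl.mpr hxP
    have hccard : (Pᶜ).card = 1 := by
      rw [Finset.card_compl]
      omega
    have hPc : Pᶜ = {x} := by
      rw [Finset.card_eq_one] at hccard
      obtain ⟨a, ha⟩ := hccard
      rw [ha] at hxcompl ⊢
      simp only [Finset.mem_singleton] at hxcompl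
      rw [hxcompl]
    have hyP : y ∈ P := by
      by_contra hyc
      have : y ∈ Pᶜ := Finset.mem_compl.mpr hyc
      rw [hPc] at this
      simp only [Finset.mem_singleton] at this
      exact G.ne_of_adj hxy this.symm
    have hfy : f y = Mv := by
      have h1 : Mv ≤ f y := by
        have := Finset.mem_filter.mp hyP
        exact this.2
      have h2 := hzmax y (Finset.mem_univ y)
      omega
    have hfx : f x < Mv := by
      by_contra hcc
      push_neg at hcc
      exact hxP (by
        simp only [hP, Finset.mem_filter, Finset.mem_univ, true_and]
        exact hcc)
    have hlapy : 1 ≤ lapAt G f y := by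
      unfold lapAt
      have hmem : x ∈ G.neighborFinset y := by
        rw [SimpleGraph.mem_neighborFinset]
        exact hxy.symm
      have hterm : ∀ u ∈ G.neighborFinset y, 0 ≤ f y - f u := by
        intro u hu
        have := hzmax u (Finset.mem_univ u)
        omega
      have := Finset.single_le_sum hterm hmem
      omega
    have := hDlap y
    omega

lemma my_gon_lower [Nonempty V] (hδ : Fintype.card V / 2 + 1 ≤ G.minDegree)
    {D₀ : V → ℤ} (hEff : Effective D₀) {d α : ℕ} (hdeg : degDiv D₀ = (d : ℤ))
    (hPR : PositiveRank G D₀)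
    (hind : ∀ I : Finset V, (∀ u ∈ I, ∀ v ∈ I, u ≠ v → ¬ G.Adj u v) → I.card ≤ α)
    (hα1 : 1 ≤ α) :
    Fintype.card V - α ≤ d := by
  classical
  set n := Fintype.card V with hn
  by_contra hcon
  push_neg at hcon
  have hn3 : 3 ≤ n := my_card_ge_three G hδ
  have hαn : α + d + 1 ≤ n := by omega
  have hd2 : d + 2 ≤ n := by omega
  have hconn : G.Connected := my_connected G (by omega)
  obtain ⟨q⟩ := ‹Nonempty V›
  obtain ⟨D, hDeff, hequiv, hDq1, hNL⟩ := my_stage1 G hconn hPR q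
  have hDdeg : degDiv D = (d : ℤ) := by
    rw [← my_linEquiv_deg G hequiv]; exact hdeg
  have hDsum : ∀ s : Finset V, ∑ v ∈ s, D v ≤ (d : ℤ) := by
    intro s
    rw [← hDdeg, degDiv]
    exact Finset.sum_le_sum_of_subset_of_nonneg (Finset.subset_univ s) (fun v _ _ => hDeff v)
  -- nonzero set
  set Zc := Finset.univ.filter (fun v => D v ≠ 0) with hZc
  have hZc1 : ∀ v ∈ Zc, 1 ≤ D v := by
    intro v hv
    have h1 := hDeff v
    have h2 := (Finset.mem_filter.mp hv).2
    omega
  have hZccard : (Zc.card : ℤ) ≤ ∑ v ∈ Zc, D v := by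
    have := Finset.card_nsmul_le_sum Zc D 1 hZc1
    simpa using this
  -- there is an edge with both endpoints zero
  have hedge : ∃ x y, G.Adj x y ∧ D x = 0 ∧ D y = 0 := by
    by_contra hcon2
    push_neg at hcon2
    have hindep : ∀ u ∈ Finset.univ.filter (fun v => D v = 0),
        ∀ v ∈ Finset.univ.filter (fun v => D v = 0), u ≠ v → ¬ G.Adj u v := by
      intro u hu v hv hne hadj
      have hu0 := (Finset.mem_filter.mp hu).2
      have hv0 := (Finset.mem_filter.mp hv).2
      exact (hcon2 u v hadj hu0) hv0
    have hZcard := hind _ hindep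
    have hsplit : (Finset.univ.filter (fun v => D v = 0)).card + Zc.card = n := by
      rw [hZc]
      rw [Finset.card_filter_add_card_filter_not (fun v => D v = 0)]
      exact Finset.card_univ
    have hsum : ∑ v ∈ Zc, D v ≤ (d : ℤ) := hDsum Zc
    omega
  obtain ⟨x, y, hxy, hx, hy⟩ := hedge
  have hq : (G.degree q : ℤ) ≤ D q :=
    (my_key G hδ hPR hDeff hequiv hDdeg hd2 q hNL x y hxy hx hy).1
  have hδq : G.minDegree ≤ G.degree q := G.minDegree_le_degree q
  have hq0 : D q ≠ 0 := by
    have : (1:ℤ) ≤ D q := hDq1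
    omega
  -- |Zc| ≤ d - deg q + 1
  have hZcsmall : (Zc.card : ℤ) ≤ (d : ℤ) - (G.degree q : ℤ) + 1 := by
    have hqZc : q ∈ Zc := by
      simp only [hZc, Finset.mem_filter, Finset.mem_univ, true_and]
      exact hq0
    have h1 : ∑ v ∈ Zc, D v = D q + ∑ v ∈ Zc.erase q, D v := by
      rw [Finset.add_sum_erase Zc D hqZc]
    have h2 : ((Zc.erase q).card : ℤ) ≤ ∑ v ∈ Zc.erase q, D v := by
      have := Finset.card_nsmul_le_sum (Zc.erase q) D 1
        (fun v hv => hZc1 v (Finset.mem_of_mem_erase hv))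
      simpa using this
    have h3 : (Zc.erase q).card = Zc.card - 1 := Finset.card_erase_of_mem hqZc
    have h4 : 1 ≤ Zc.card := Finset.card_pos.mpr ⟨q, hqZc⟩
    have h5 := hDsum Zc
    have h6 : ((Zc.erase q).card : ℤ) = (Zc.card : ℤ) - 1 := by
      rw [h3]; push_cast [h4]; omega
    omega
  -- every vertex has a zero neighbor
  have hzeronbr : ∀ w : V, ∃ u, G.Adj w u ∧ D u = 0 := by
    intro w
    by_contra hcc
    push_neg at hcc
    have hsub : G.neighborFinset w ⊆ Zc := by
      intro u hu
      simp only [hZc, Finset.mem_filter, Finset.mem_univ, true_and]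
      exact hcc u (my_adj_of_mem hu)
    have h1 : G.degree w ≤ Zc.card := by
      have := Finset.card_le_card hsub
      exact this
    have h2 : G.minDegree ≤ G.degree w := G.minDegree_le_degree w
    have h3 : n + 1 ≤ 2 * G.minDegree := by omega
    -- deg w ≤ Zc.card ≤ d - deg q + 1; deg w + deg q ≥ 2δ ≥ n+1; d ≤ n - 3
    have h4 : (G.degree w : ℤ) ≤ (d : ℤ) - (G.degree q : ℤ) + 1 := by
      have : (G.degree w : ℤ) ≤ (Zc.card : ℤ) := by exact_mod_cast h1
      omega
    have h5 : (G.degree w : ℤ) + (G.degree q : ℤ) ≥ 2 * (G.minDegree : ℤ) := by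
      have hw : (G.minDegree : ℤ) ≤ (G.degree w : ℤ) := by exact_mod_cast h2
      have hqq : (G.minDegree : ℤ) ≤ (G.degree q : ℤ) := by exact_mod_cast hδq
      omega
    have h6 : ((n : ℤ)) + 1 ≤ 2 * (G.minDegree : ℤ) := by exact_mod_cast h3
    have h7 : (d : ℤ) + 2 ≤ (n : ℤ) := by exact_mod_cast hd2
    omega
  -- the far zero set W
  set U := (insert q (G.neighborFinset q))ᶜ with hU
  have hUmem : ∀ v, v ∈ U ↔ (¬ G.Adj q v ∧ v ≠ q) := by
    intro v
    simp only [hU, Finset.mem_compl, Finset.mem_insert, SimpleGraph.mem_neighborFinset]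
    tauto
  have hUcard : U.card = n - 1 - G.degree q := by
    rw [hU, Finset.card_compl]
    rw [Finset.card_insert_of_notMem (by
      simp only [SimpleGraph.mem_neighborFinset]
      exact G.irrefl)]
    have hdq : G.degree q = (G.neighborFinset q).card := rfl
    omega
  set W := U.filter (fun v => D v = 0) with hW
  set T := U.filter (fun v => D v ≠ 0) with hT
  have hWT : W.card + T.card = U.card := by
    rw [hW, hT]
    exact Finset.card_filter_add_card_filter_not (fun v => D v = 0)
  -- T is small
  have hTbound : (T.card : ℤ) ≤ (d : ℤ) - D q := by
    have hqT : q ∉ T := by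
      intro hqT
      have := (Finset.mem_filter.mp hqT).1
      rw [hUmem q] at this
      exact this.2 rfl
    have h1 : ∑ v ∈ insert q T, D v ≤ (d : ℤ) := hDsum _
    have h2 : ∑ v ∈ insert q T, D v = D q + ∑ v ∈ T, D v :=
      Finset.sum_insert hqT
    have h3 : (T.card : ℤ) ≤ ∑ v ∈ T, D v := by
      have := Finset.card_nsmul_le_sum T D 1 (fun v hv => by
        have h4 := hDeff v
        have h5 := (Finset.mem_filter.mp hv).2
        omega)
      simpa using this
    omega
  -- W is big
  have hWbig : α + 1 ≤ W.card + 1 ∧ α ≤ W.card := by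
    have h1 : (W.card : ℤ) = (U.card : ℤ) - T.card := by
      have : (W.card : ℤ) + T.card = U.card := by exact_mod_cast hWT
      omega
    have h2 : ((U.card : ℤ)) = (n : ℤ) - 1 - G.degree q := by
      rw [hUcard]
      have h3 : G.degree q < n := G.degree_lt_card_verts q
      push_cast [Nat.cast_sub]
      omega
    have h4 : (α : ℤ) + d + 1 ≤ n := by exact_mod_cast hαn
    have h5 : (α : ℤ) ≤ (W.card : ℤ) := by omega
    constructor <;> [skip; exact_mod_cast h5]
    have : α ≤ W.card := by exact_mod_cast h5
    omega
  -- every member of W protects its far neighbors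
  have hKall : ∀ w ∈ W, ∀ v, G.Adj w v → ¬ G.Adj q v → 1 ≤ D v := by
    intro w hw
    have hw0 : D w = 0 := (Finset.mem_filter.mp hw).2
    have hwU : ¬ G.Adj q w ∧ w ≠ q := (hUmem w).mp (Finset.mem_filter.mp hw).1
    obtain ⟨yw, hywadj, hyw0⟩ := hzeronbr w
    exact (my_key G hδ hPR hDeff hequiv hDdeg hd2 q hNL w yw hywadj hw0 hyw0).2 hwU.1
  -- the enlarged independent set
  have hqW : q ∉ W := by
    intro hqW
    exact ((hUmem q).mp (Finset.mem_filter.mp hqW).1).2 rfl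
  have hindep' : ∀ u ∈ insert q W, ∀ v ∈ insert q W, u ≠ v → ¬ G.Adj u v := by
    intro u hu v hv hne hadj
    rcases Finset.mem_insert.mp hu with rfl | huW
    · rcases Finset.mem_insert.mp hv with rfl | hvW
      · exact hne rfl
      · exact ((hUmem v).mp (Finset.mem_filter.mp hvW).1).1 hadj
    · rcases Finset.mem_insert.mp hv with rfl | hvW
      · exact ((hUmem u).mp (Finset.mem_filter.mp huW).1).1 hadj.symm
      · have h1 := hKall u huW v hadj (((hUmem v).mp (Finset.mem_filter.mp hvW).1).1)
        have h2 : D v = 0 := (Finset.mem_filter.mp hvW).2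
        omega
  have hcard' : (insert q W).card = W.card + 1 := Finset.card_insert_of_notMem hqW
  have := hind _ hindep'
  omega

lemma my_indep_bddAbove :
    BddAbove {k | ∃ S : Finset V, (∀ u ∈ S, ∀ v ∈ S, u ≠ v → ¬ G.Adj u v) ∧ S.card = k} := by
  refine ⟨Fintype.card V, ?_⟩
  rintro k ⟨S, -, rfl⟩
  exact Finset.card_le_univ S

lemma my_indep_le (I : Finset V) (hI : ∀ u ∈ I, ∀ v ∈ I, u ≠ v → ¬ G.Adj u v) :
    I.card ≤ _root_.indepNum G :=
  le_csSup (my_indep_bddAbove G) ⟨I, hI, rfl⟩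

lemma my_indep_exists :
    ∃ I : Finset V, (∀ u ∈ I, ∀ v ∈ I, u ≠ v → ¬ G.Adj u v) ∧ I.card = _root_.indepNum G := by
  have hne : {k | ∃ S : Finset V, (∀ u ∈ S, ∀ v ∈ S, u ≠ v → ¬ G.Adj u v) ∧ S.card = k}.Nonempty :=
    ⟨0, ∅, by simp, rfl⟩
  have := Nat.sSup_mem hne (my_indep_bddAbove G)
  exact this

lemma my_indep_pos [Nonempty V] : 1 ≤ _root_.indepNum G := by
  obtain ⟨v⟩ := ‹Nonempty V›
  have : ({v} : Finset V).card ≤ _root_.indepNum G := by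
    apply my_indep_le
    intro a ha b hb hne
    simp only [Finset.mem_singleton] at ha hb
    exact absurd (ha.trans hb.symm) hne
  simpa using this

lemma my_indep_lt_card [Nonempty V] (hδ : Fintype.card V / 2 + 1 ≤ G.minDegree) :
    _root_.indepNum G + 1 ≤ Fintype.card V := by
  obtain ⟨I, hI, hIcard⟩ := my_indep_exists G
  by_contra hcc
  push_neg at hcc
  have hIuniv : I = Finset.univ := by
    apply Finset.eq_univ_of_card
    have := Finset.card_le_univ I
    omega
  -- but there is an edge
  obtain ⟨v⟩ := ‹Nonempty V›
  have h1 : 1 ≤ G.degree v := by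
    have := G.minDegree_le_degree v
    have h2 : 1 ≤ Fintype.card V / 2 + 1 := by omega
    omega
  have h2 : (G.neighborFinset v).Nonempty := by
    rw [← Finset.card_pos]
    exact h1
  obtain ⟨u, hu⟩ := h2
  have hadj : G.Adj v u := my_adj_of_mem hu
  exact hI v (hIuniv ▸ Finset.mem_univ v) u (hIuniv ▸ Finset.mem_univ u) hadj.ne hadj

lemma my_filter_mem_eq (I : Finset V) : Finset.univ.filter (fun v => v ∈ I) = I := by
  ext v; simp

lemma my_gon_upper_witness [Nonempty V] (hδ : Fintype.card V / 2 + 1 ≤ G.minDegree)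
    (I : Finset V) (hI : ∀ u ∈ I, ∀ v ∈ I, u ≠ v → ¬ G.Adj u v) :
    ∃ D : V → ℤ, Effective D ∧ degDiv D = ((Fintype.card V - I.card : ℕ) : ℤ)
      ∧ PositiveRank G D := by
  classical
  set D : V → ℤ := fun v => if v ∈ I then 0 else 1 with hD
  have hDeff : Effective D := by
    intro v; simp only [hD]; split <;> omega
  refine ⟨D, hDeff, ?_, ?_⟩
  · -- degree
    have h1 : degDiv D = ∑ v, ((1 : ℤ) - if v ∈ I then 1 else 0) := by
      unfold degDiv
      apply Finset.sum_congr rfl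
      intro v _
      simp only [hD]
      split <;> ring
    rw [h1, Finset.sum_sub_distrib]
    rw [Finset.sum_boole]
    rw [my_filter_mem_eq]
    simp only [Finset.sum_const, Finset.card_univ, nsmul_eq_mul, mul_one]
    have : I.card ≤ Fintype.card V := Finset.card_le_univ I
    push_cast [this]
    ring
  · -- positive rank
    intro q
    by_cases hqI : q ∈ I
    · -- fire everything but q
      set f : V → ℤ := fun v => if v = q then 0 else 1 with hf
      refine ⟨fun v => D v - (if v = q then 1 else 0) - lapAt G f v, ?_,
        ⟨f, fun v => by dsimp only; ring⟩⟩
      intro v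
      dsimp only
      by_cases hvq : v = q
      · subst hvq
        have hlap : lapAt G f v = - (G.degree v : ℤ) := by
          unfold lapAt
          have : ∀ u ∈ G.neighborFinset v, f v - f u = -1 := by
            intro u hu
            have huv : u ≠ v := (my_adj_of_mem hu).ne'
            simp only [hf, if_pos rfl, huv, if_false]
            ring
          rw [Finset.sum_congr rfl this, Finset.sum_const, nsmul_eq_mul]
          have : G.degree v = (G.neighborFinset v).card := rfl
          rw [this]
          ring
        rw [hlap]
        have hD0 : D v = 0 := by simp only [hD, if_pos hqI]
        rw [hD0]
        simp only [if_pos rfl]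
        have h1 : 1 ≤ G.degree v := by
          have := G.minDegree_le_degree v
          omega
        have : (1 : ℤ) ≤ (G.degree v : ℤ) := by exact_mod_cast h1
        omega
      · have hlap : lapAt G f v = if G.Adj v q then 1 else 0 := by
          unfold lapAt
          have hterm : ∀ u ∈ G.neighborFinset v, f v - f u = if u = q then 1 else 0 := by
            intro u hu
            simp only [hf, hvq, if_false]
            by_cases huq : u = q <;> simp [huq]
          rw [Finset.sum_congr rfl hterm]
          rw [Finset.sum_ite_eq' (G.neighborFinset v) q (fun _ => (1:ℤ))]
          by_cases hadj : G.Adj v q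
          · rw [if_pos (by rwa [SimpleGraph.mem_neighborFinset]), if_pos hadj]
          · rw [if_neg (by rwa [SimpleGraph.mem_neighborFinset]), if_neg hadj]
        rw [hlap]
        simp only [hvq, if_false]
        by_cases hadj : G.Adj v q
        · have hvI : v ∉ I := by
            intro hvI
            exact hI v hvI q hqI hvq hadj
          simp only [hD, hvI, if_false, if_pos hadj]
          omega
        · simp only [hD, if_neg hadj]
          split <;> omega
    · -- q already has a chip
      refine ⟨fun v => D v - (if v = q then 1 else 0), ?_, ⟨fun _ => 0, fun v => by
        have h0 : lapAt G (fun _ => (0:ℤ)) v = 0 := by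
          unfold lapAt
          simp
        dsimp only
        rw [h0]
        ring⟩⟩
      intro v
      dsimp only
      by_cases hvq : v = q
      · subst hvq
        simp only [hD, hqI, if_false, if_pos rfl]
        omega
      · simp only [hD, hvq, if_false]
        split <;> omega

lemma my_gonality_eq [Nonempty V] (hδ : Fintype.card V / 2 + 1 ≤ G.minDegree) :
    gonality G = Fintype.card V - _root_.indepNum G := by
  classical
  obtain ⟨I, hI, hIcard⟩ := my_indep_exists G
  have hmem : Fintype.card V - _root_.indepNum G ∈
      {d : ℕ | ∃ D : V → ℤ, Effective D ∧ degDiv D = d ∧ PositiveRank G D} := by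
    obtain ⟨D, h1, h2, h3⟩ := my_gon_upper_witness G hδ I hI
    exact ⟨D, h1, by rw [h2, hIcard], h3⟩
  apply le_antisymm
  · exact Nat.sInf_le hmem
  · apply le_csInf ⟨_, hmem⟩
    rintro d ⟨D, hDeff, hDdeg, hDPR⟩
    exact my_gon_lower G hδ hDeff hDdeg hDPR (fun J hJ => my_indep_le G J hJ)
      (my_indep_pos G)

lemma my_pair_connected {x y : V} (hxy : G.Adj x y) :
    (G.induce (({x, y} : Finset V) : Set V)).Connected := by
  have hx : x ∈ (({x, y} : Finset V) : Set V) := by simp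
  haveI : Nonempty (({x, y} : Finset V) : Set V) := ⟨⟨x, hx⟩⟩
  constructor
  rintro ⟨a, ha⟩ ⟨b, hb⟩
  simp only [Finset.coe_insert, Finset.coe_singleton, Set.mem_insert_iff,
    Set.mem_singleton_iff] at ha hb
  by_cases hab : a = b
  · subst hab
    rfl
  · apply SimpleGraph.Adj.reachable
    rw [SimpleGraph.comap_adj]
    rcases ha with rfl | rfl <;> rcases hb with rfl | rfl
    · exact absurd rfl hab
    · exact hxy
    · exact hxy.symm
    · exact absurd rfl hab

lemma my_exists_edge [Nonempty V] (hδ : Fintype.card V / 2 + 1 ≤ G.minDegree) :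
    ∃ a b : V, G.Adj a b := by
  obtain ⟨v⟩ := ‹Nonempty V›
  have h1 : 1 ≤ G.degree v := by
    have := G.minDegree_le_degree v
    omega
  have h2 : (G.neighborFinset v).Nonempty := by
    rw [← Finset.card_pos]; exact h1
  obtain ⟨u, hu⟩ := h2
  exact ⟨v, u, my_adj_of_mem hu⟩

lemma my_connected_pair {E : Finset V} (hconn : (G.induce (E : Set V)).Connected)
    {u v : V} (hu : u ∈ E) (hv : v ∈ E) (huv : u ≠ v) :
    ∃ a b, a ∈ E ∧ b ∈ E ∧ G.Adj a b := by
  have hreach := hconn.preconnected ⟨u, by simpa using hu⟩ ⟨v, by simpa using hv⟩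
  obtain ⟨w⟩ := hreach
  have hlen : 0 < w.length := by
    by_contra h
    push_neg at h
    have h0 : w.length = 0 := by omega
    have := SimpleGraph.Walk.eq_of_length_eq_zero h0
    exact huv (congrArg Subtype.val this)
  have hadj := SimpleGraph.Walk.adj_getVert_succ w (i := 0) hlen
  rw [SimpleGraph.comap_adj] at hadj
  exact ⟨_, _, Finset.mem_coe.mp (w.getVert 0).2, Finset.mem_coe.mp (w.getVert 1).2, hadj⟩

lemma my_crossing_singleton (v : V) : crossingEdges G {v} = G.degree v := by
  rw [my_crossingEdges_eq_sum, Finset.sum_singleton]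
  have h1 : (G.neighborFinset v) \ {v} = G.neighborFinset v := by
    ext u
    simp only [Finset.mem_sdiff, Finset.mem_singleton]
    exact ⟨fun h => h.1, fun h => ⟨h, (my_adj_of_mem h).ne'⟩⟩
  rw [h1]
  rfl

lemma my_hitNum_le_card (S : Finset (Finset V)) (hScr : IsScramble G S) :
    hitNum S ≤ Fintype.card V :=
  Nat.sInf_le ⟨Finset.univ, fun E hE => by
    rw [Finset.inter_univ]; exact (hScr.2 E hE).1, Finset.card_univ⟩

lemma my_order_le_hit (S : Finset (Finset V)) : scrambleOrder G S ≤ hitNum S := by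
  unfold scrambleOrder
  have h := min_le_left (hitNum S : ℕ∞) (cutNum G S)
  have h2 := ENat.toNat_le_toNat h (by simp : (hitNum S : ℕ∞) ≠ ⊤)
  rwa [ENat.toNat_coe] at h2

lemma my_edge_scramble [Nonempty V] (hδ : Fintype.card V / 2 + 1 ≤ G.minDegree) :
    ∃ S : Finset (Finset V), IsScramble G S ∧
      Fintype.card V - _root_.indepNum G ≤ scrambleOrder G S := by
  classical
  set S := Finset.univ.filter (fun E : Finset V => ∃ a b, G.Adj a b ∧ E = {a, b}) with hS
  obtain ⟨a0, b0, hab0⟩ := my_exists_edge G hδ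
  have hSmem : ∀ {a b : V}, G.Adj a b → ({a, b} : Finset V) ∈ S := fun {a b} h => by
    simp only [hS, Finset.mem_filter, Finset.mem_univ, true_and]
    exact ⟨a, b, h, rfl⟩
  have hScr : IsScramble G S := by
    refine ⟨⟨{a0, b0}, hSmem hab0⟩, ?_⟩
    intro E hE
    simp only [hS, Finset.mem_filter, Finset.mem_univ, true_and] at hE
    obtain ⟨a, b, hadj, rfl⟩ := hE
    exact ⟨⟨a, by simp⟩, my_pair_connected G hadj⟩
  refine ⟨S, hScr, ?_⟩
  have hα1 : 1 ≤ _root_.indepNum G := my_indep_pos G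
  have hhit : (Fintype.card V - _root_.indepNum G : ℕ) ≤ hitNum S := by
    apply le_csInf
    · exact ⟨Fintype.card V, Finset.univ, fun E hE => by
        rw [Finset.inter_univ]; exact (hScr.2 E hE).1, Finset.card_univ⟩
    rintro k ⟨C, hC, rfl⟩
    have hind : ∀ u ∈ Cᶜ, ∀ v ∈ Cᶜ, u ≠ v → ¬ G.Adj u v := by
      intro u hu v hv hne hadj
      obtain ⟨w, hw⟩ := hC _ (hSmem hadj)
      rw [Finset.mem_inter] at hw
      rcases Finset.mem_insert.mp hw.1 with rfl | hw2
      · exact (Finset.mem_compl.mp hu) hw.2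
      · rw [Finset.mem_singleton] at hw2
        subst hw2
        exact (Finset.mem_compl.mp hv) hw.2
    have h1 : Cᶜ.card ≤ _root_.indepNum G := my_indep_le G Cᶜ hind
    have h2 : Cᶜ.card = Fintype.card V - C.card := Finset.card_compl C
    have h3 : C.card ≤ Fintype.card V := Finset.card_le_univ C
    omega
  have hcut : ((Fintype.card V - _root_.indepNum G : ℕ) : ℕ∞) ≤ cutNum G S := by
    apply le_sInf
    rintro k ⟨A, ⟨E1, hE1S, hE1A⟩, ⟨E2, hE2S, hE2A⟩, rfl⟩
    have hcard2 : ∀ E ∈ S, E.card = 2 := by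
      intro E hE
      simp only [hS, Finset.mem_filter, Finset.mem_univ, true_and] at hE
      obtain ⟨a, b, hadj, rfl⟩ := hE
      rw [Finset.card_insert_of_notMem (by simp [hadj.ne]), Finset.card_singleton]
    have h1 : 2 ≤ A.card := by
      have := Finset.card_le_card hE1A
      rwa [hcard2 E1 hE1S] at this
    have h2 : A.card + 2 ≤ Fintype.card V := by
      have h4 := Finset.card_le_card hE2A
      rw [hcard2 E2 hE2S, Finset.card_compl] at h4
      have h3 : A.card ≤ Fintype.card V := Finset.card_le_univ A
      omega
    have h4 := my_crossing_big G hδ A h1 h2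
    have h5 : Fintype.card V - _root_.indepNum G ≤ crossingEdges G A := by omega
    exact_mod_cast h5
  unfold scrambleOrder
  have hmin : ((Fintype.card V - _root_.indepNum G : ℕ) : ℕ∞)
      ≤ min (hitNum S : ℕ∞) (cutNum G S) :=
    le_min (by exact_mod_cast hhit) hcut
  have hne : min (hitNum S : ℕ∞) (cutNum G S) ≠ ⊤ := by
    intro hcc
    have h6 := min_le_left (hitNum S : ℕ∞) (cutNum G S)
    rw [hcc, top_le_iff] at h6
    exact (ENat.coe_ne_top _) h6
  have h7 := ENat.coe_toNat hne
  have h6 : ((Fintype.card V - _root_.indepNum G : ℕ) : ℕ∞)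
      ≤ (((min (hitNum S : ℕ∞) (cutNum G S)).toNat : ℕ) : ℕ∞) := by
    rw [h7]
    exact hmin
  exact_mod_cast h6

lemma my_scramble_bdd : BddAbove {k | ∃ S : Finset (Finset V),
    IsScramble G S ∧ k = scrambleOrder G S} := by
  refine ⟨Fintype.card V, ?_⟩
  rintro k ⟨S, hS, rfl⟩
  exact (my_order_le_hit G S).trans (my_hitNum_le_card G S hS)

lemma my_sn_ge [Nonempty V] (hδ : Fintype.card V / 2 + 1 ≤ G.minDegree) :
    Fintype.card V - _root_.indepNum G ≤ scrambleNumber G := by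
  obtain ⟨S, hScr, hord⟩ := my_edge_scramble G hδ
  exact hord.trans (le_csSup (my_scramble_bdd G) ⟨S, hScr, rfl⟩)

lemma my_sn_le [Nonempty V] (hδ : Fintype.card V / 2 + 1 ≤ G.minDegree) :
    scrambleNumber G ≤ Fintype.card V - _root_.indepNum G := by
  apply csSup_le
  · obtain ⟨S, hScr, -⟩ := my_edge_scramble G hδ
    exact ⟨scrambleOrder G S, S, hScr, rfl⟩
  rintro k ⟨S', hScr', rfl⟩
  obtain ⟨I, hI, hIcard⟩ := my_indep_exists G
  by_cases hhit : ∀ E ∈ S', (E ∩ Iᶜ).Nonempty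
  · calc scrambleOrder G S' ≤ hitNum S' := my_order_le_hit G S'
      _ ≤ Iᶜ.card := Nat.sInf_le ⟨Iᶜ, hhit, rfl⟩
      _ = Fintype.card V - _root_.indepNum G := by rw [Finset.card_compl, hIcard]
  · push_neg at hhit
    obtain ⟨E, hES, hEempty⟩ := hhit
    have hEI : E ⊆ I := by
      intro v hv
      by_contra hvI
      have hmem : v ∈ E ∩ Iᶜ := Finset.mem_inter.mpr ⟨hv, Finset.mem_compl.mpr hvI⟩
      rw [hEempty] at hmem
      exact absurd hmem (Finset.notMem_empty v)
    obtain ⟨hEne, hEconn⟩ := hScr'.2 E hES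
    obtain ⟨v, hv⟩ := hEne
    have hEsing : E = {v} := by
      rw [Finset.eq_singleton_iff_unique_mem]
      refine ⟨hv, fun u hu => ?_⟩
      by_contra hne
      obtain ⟨a, b, haE, hbE, hadj⟩ := my_connected_pair G hEconn hu hv hne
      exact hI a (hEI haE) b (hEI hbE) hadj.ne hadj
    have hvI : v ∈ I := hEI hv
    by_cases hall : ∀ E' ∈ S', v ∈ E'
    · have h1 : hitNum S' ≤ 1 := Nat.sInf_le ⟨{v}, fun E' hE' =>
        ⟨v, Finset.mem_inter.mpr ⟨hall E' hE', Finset.mem_singleton_self v⟩⟩,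
        Finset.card_singleton v⟩
      have h2 := my_order_le_hit G S'
      have h3 := my_indep_lt_card G hδ
      omega
    · push_neg at hall
      obtain ⟨E₂, hE₂S, hE₂v⟩ := hall
      have hcutle : cutNum G S' ≤ (crossingEdges G {v} : ℕ∞) := by
        apply sInf_le
        refine ⟨{v}, ⟨E, hES, by rw [hEsing]⟩, ⟨E₂, hE₂S, ?_⟩, rfl⟩
        intro u hu
        rw [Finset.mem_compl, Finset.mem_singleton]
        intro h
        subst h
        exact hE₂v hu
      have hdeg : crossingEdges G {v} = G.degree v := my_crossing_singleton G v
      have hdegle : G.degree v ≤ Fintype.card V - _root_.indepNum G := by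
        have hsub : G.neighborFinset v ⊆ Iᶜ := by
          intro u hu
          rw [Finset.mem_compl]
          intro huI
          exact hI v hvI u huI (my_adj_of_mem hu).ne (my_adj_of_mem hu)
        have h4 := Finset.card_le_card hsub
        rw [Finset.card_compl, hIcard] at h4
        exact h4
      unfold scrambleOrder
      have hcne : cutNum G S' ≠ ⊤ := fun hcc => by
        rw [hcc, top_le_iff] at hcutle
        exact (ENat.coe_ne_top _) hcutle
      have h4 := ENat.toNat_le_toNat (min_le_right (hitNum S' : ℕ∞) (cutNum G S')) hcne
      have h5 : (cutNum G S').toNat ≤ G.degree v := by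
        have h6 := ENat.toNat_le_toNat hcutle (by simp)
        rwa [ENat.toNat_coe, hdeg] at h6
      omega

lemma my_sn_eq [Nonempty V] (hδ : Fintype.card V / 2 + 1 ≤ G.minDegree) :
    scrambleNumber G = Fintype.card V - _root_.indepNum G :=
  le_antisymm (my_sn_le G hδ) (my_sn_ge G hδ)

end MyAux

theorem stmt9 [Fintype V] [Nonempty V] (G : SimpleGraph V)
    (hδ : Fintype.card V / 2 + 1 ≤ G.minDegree) :
    scrambleNumber G = gonality G ∧ gonality G = Fintype.card V - _root_.indepNum G := by
  have h2 := my_gonality_eq G hδ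
  have h1 := my_sn_eq G hδ
  exact ⟨by rw [h1, h2], h2⟩
end

section
/- Let G and H be connected graphs such that G is k-vertex-connected and |V(G)| ≥ 2k − 1. Then sn(G □ H) ≥ min(k·|V(H)|, |V(G)|·λ(H), (|V(G)| − 2k + 2)·λ(H) + 2·λ(G)). -/
open SimpleGraph Finset

attribute [local instance] Classical.propDecidable

variable {V : Type*}

section AuxLemmas

variable {W : Type*} [Fintype W]

/-- The crossing edges of a nonempty proper cut witness edge-connectivity. -/
lemma edgeConnectivity_le_crossingEdges (X : SimpleGraph W) (B : Finset W)
    (hB : B.Nonempty) (hBc : Bᶜ.Nonempty) :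
    edgeConnectivity X ≤ crossingEdges X B := by
  classical
  set P : Finset (W × W) :=
    Finset.univ.filter (fun p : W × W => p.1 ∈ B ∧ p.2 ∉ B ∧ X.Adj p.1 p.2) with hP
  set D : Finset (Sym2 W) := P.image (fun p => s(p.1, p.2)) with hD
  have hDcard : D.card = P.card := by
    apply Finset.card_image_of_injOn
    intro p hp q hq hpq
    simp only [hP, Finset.mem_coe, Finset.mem_filter] at hp hq
    rcases Sym2.eq_iff.mp hpq with ⟨h1, h2⟩ | ⟨h1, h2⟩
    · exact Prod.ext h1 h2
    · exact absurd (h1 ▸ hp.2.1) (fun h => hq.2.2.1 h)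
  have hDsub : ↑D ⊆ X.edgeSet := by
    intro e he
    simp only [hD, Finset.coe_image, Set.mem_image, Finset.mem_coe, hP, Finset.mem_filter] at he
    obtain ⟨p, hp, rfl⟩ := he
    exact hp.2.2.2
  have hkey : ∀ x y : W, (X.deleteEdges ↑D).Reachable x y → x ∈ B → y ∈ B := by
    intro x y hxy hx
    obtain ⟨wlk⟩ := hxy
    induction wlk with
    | nil => exact hx
    | @cons xa za ya h p ih =>
      apply ih
      rw [SimpleGraph.deleteEdges_adj] at h
      by_contra hz
      exact h.2 (by
        simp only [hD, Finset.coe_image, Set.mem_image, Finset.mem_coe]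
        refine ⟨(xa, za), ?_, rfl⟩
        simp [hP, hx, hz, h.1])
  have hnc : ¬ (X.deleteEdges ↑D).Connected := by
    intro hc
    obtain ⟨b, hb⟩ := hB
    obtain ⟨c, hc'⟩ := hBc
    have := hkey b c (hc.preconnected b c) hb
    simp only [Finset.mem_compl] at hc'
    exact hc' this
  have : edgeConnectivity X ≤ D.card := Nat.sInf_le ⟨D, hDsub, rfl, hnc⟩
  rw [hDcard] at this
  exact this.trans (le_of_eq rfl)

end AuxLemmas
section Decomp

variable {α β : Type*} [Fintype α] [Fintype β]

/-- The fiber of `A` over `u : α`. -/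
noncomputable def fibB (A : Finset (α × β)) (u : α) : Finset β :=
  Finset.univ.filter (fun w => (u, w) ∈ A)

/-- The row of `A` at `w : β`. -/
noncomputable def rowB (A : Finset (α × β)) (w : β) : Finset α :=
  Finset.univ.filter (fun u => (u, w) ∈ A)

lemma card_vert_fiber (G : SimpleGraph α) (H : SimpleGraph β) (A : Finset (α × β)) (u : α) :
    ((Finset.univ.filter (fun p : (α × β) × (α × β) =>
        ((p.1 ∈ A ∧ p.2 ∉ A ∧ (G □ H).Adj p.1 p.2) ∧ p.1.1 = p.2.1) ∧ p.1.1 = u)).card)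
      = crossingEdges H (fibB A u) := by
  classical
  unfold crossingEdges
  apply Finset.card_nbij' (fun p => (p.1.2, p.2.2)) (fun q => ((u, q.1), (u, q.2)))
  · intro p hp
    simp only [Finset.mem_coe, Finset.mem_filter, Finset.mem_univ, true_and] at hp ⊢
    obtain ⟨⟨⟨h1, h2, h3⟩, h4⟩, h5⟩ := hp
    have hp1 : p.1 = (u, p.1.2) := Prod.ext h5 rfl
    have hp2 : p.2 = (u, p.2.2) := Prod.ext (h4.symm.trans h5) rfl
    refine ⟨?_, ?_, ?_⟩
    · simp only [fibB, Finset.mem_filter, Finset.mem_univ, true_and]; rwa [← hp1]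
    · simp only [fibB, Finset.mem_filter, Finset.mem_univ, true_and]; rwa [← hp2]
    · rw [hp1, hp2] at h3; exact (SimpleGraph.boxProd_adj_right).mp h3
  · intro q hq
    simp only [Finset.mem_coe, Finset.mem_filter, Finset.mem_univ, true_and, fibB] at hq
    rw [Finset.mem_coe, Finset.mem_filter]
    exact ⟨Finset.mem_univ _, ⟨⟨hq.1, hq.2.1, (SimpleGraph.boxProd_adj_right).mpr hq.2.2⟩, rfl⟩, rfl⟩
  · intro p hp
    simp only [Finset.mem_coe, Finset.mem_filter] at hp
    obtain ⟨⟨⟨-, -, -⟩, h4⟩, h5⟩ := hp.2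
    ext <;> simp [← h5, ← h4]
  · intro q hq; rfl

lemma card_horiz_fiber (G : SimpleGraph α) (H : SimpleGraph β) (A : Finset (α × β)) (w : β) :
    ((Finset.univ.filter (fun p : (α × β) × (α × β) =>
        ((p.1 ∈ A ∧ p.2 ∉ A ∧ (G □ H).Adj p.1 p.2) ∧ p.1.2 = p.2.2) ∧ p.1.2 = w)).card)
      = crossingEdges G (rowB A w) := by
  classical
  unfold crossingEdges
  apply Finset.card_nbij' (fun p => (p.1.1, p.2.1)) (fun q => ((q.1, w), (q.2, w)))
  · intro p hp
    simp only [Finset.mem_coe, Finset.mem_filter, Finset.mem_univ, true_and] at hp ⊢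
    obtain ⟨⟨⟨h1, h2, h3⟩, h4⟩, h5⟩ := hp
    have hp1 : p.1 = (p.1.1, w) := Prod.ext rfl h5
    have hp2 : p.2 = (p.2.1, w) := Prod.ext rfl (h4.symm.trans h5)
    refine ⟨?_, ?_, ?_⟩
    · simp only [rowB, Finset.mem_filter, Finset.mem_univ, true_and]; rwa [← hp1]
    · simp only [rowB, Finset.mem_filter, Finset.mem_univ, true_and]; rwa [← hp2]
    · rw [hp1, hp2] at h3; exact (SimpleGraph.boxProd_adj_left).mp h3
  · intro q hq
    simp only [Finset.mem_coe, Finset.mem_filter, Finset.mem_univ, true_and, rowB] at hq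
    rw [Finset.mem_coe, Finset.mem_filter]
    exact ⟨Finset.mem_univ _, ⟨⟨hq.1, hq.2.1, (SimpleGraph.boxProd_adj_left).mpr hq.2.2⟩, rfl⟩, rfl⟩
  · intro p hp
    simp only [Finset.mem_coe, Finset.mem_filter] at hp
    obtain ⟨⟨⟨-, -, -⟩, h4⟩, h5⟩ := hp.2
    ext <;> simp [← h5, ← h4]
  · intro q hq; rfl

lemma crossing_decomp (G : SimpleGraph α) (H : SimpleGraph β) (A : Finset (α × β)) :
    (∑ u : α, crossingEdges H (fibB A u)) + (∑ w : β, crossingEdges G (rowB A w))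
      ≤ crossingEdges (G □ H) A := by
  classical
  set S : Finset ((α × β) × (α × β)) :=
    Finset.univ.filter (fun p => p.1 ∈ A ∧ p.2 ∉ A ∧ (G □ H).Adj p.1 p.2) with hS
  have hcr : crossingEdges (G □ H) A = S.card := by unfold crossingEdges; rw [hS]; congr!
  set SV := S.filter (fun p => p.1.1 = p.2.1) with hSV
  set SH := S.filter (fun p => p.1.2 = p.2.2) with hSH
  have hdisj : Disjoint SV SH := by
    rw [Finset.disjoint_left]
    intro p hp hp'
    simp only [hSV, hSH, hS, Finset.mem_filter] at hp hp'
    have : p.1 = p.2 := Prod.ext hp.2 hp'.2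
    exact (hp.1.2.2.2.ne (this)) 
  have hsub : SV ∪ SH ⊆ S := Finset.union_subset (Finset.filter_subset _ _) (Finset.filter_subset _ _)
  have hcard : SV.card + SH.card ≤ S.card := by
    rw [← Finset.card_union_of_disjoint hdisj]
    exact Finset.card_le_card hsub
  have hV : SV.card = ∑ u : α, crossingEdges H (fibB A u) := by
    rw [Finset.card_eq_sum_card_fiberwise (f := fun p => p.1.1) (t := Finset.univ)
      (fun x _ => Finset.mem_univ _)]
    apply Finset.sum_congr rfl
    intro u _
    rw [← card_vert_fiber G H A u]
    congr 1
    ext p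
    simp only [hSV, hS, Finset.mem_filter, Finset.mem_univ, true_and]
    try tauto
  have hH : SH.card = ∑ w : β, crossingEdges G (rowB A w) := by
    rw [Finset.card_eq_sum_card_fiberwise (f := fun p => p.1.2) (t := Finset.univ)
      (fun x _ => Finset.mem_univ _)]
    apply Finset.sum_congr rfl
    intro w _
    rw [← card_horiz_fiber G H A w]
    congr 1
    ext p
    simp only [hSH, hS, Finset.mem_filter, Finset.mem_univ, true_and]
    try tauto
  rw [hcr, ← hV, ← hH]
  exact hcard

end Decomp
section Egg

variable {α β : Type*}

/-- An egg of the scramble is connected, being isomorphic to an induced subgraph of `G`. -/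
lemma egg_connected [Fintype α] [Fintype β] (G : SimpleGraph α) (H : SimpleGraph β)
    (T : Finset α) (hT : (G.induce ((↑T)ᶜ : Set α)).Connected) (w : β) :
    ((G □ H).induce (((Tᶜ ×ˢ ({w} : Finset β) : Finset (α × β)) : Finset (α × β)) :
      Set (α × β))).Connected := by
  classical
  have hmem : ∀ p : α × β, p ∈ ((Tᶜ ×ˢ ({w} : Finset β) : Finset (α × β)) : Set (α × β)) ↔
      p.1 ∈ ((↑T)ᶜ : Set α) ∧ p.2 = w := by
    intro p
    simp only [Finset.coe_product, Finset.mem_coe, Set.mem_prod, Finset.mem_product,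
      Finset.mem_compl, Finset.coe_singleton, Set.mem_singleton_iff, Set.mem_compl_iff,
      Finset.mem_coe]
  let e : ((G □ H).induce (((Tᶜ ×ˢ ({w} : Finset β) : Finset (α × β))) : Set (α × β))) ≃g
      (G.induce ((↑T)ᶜ : Set α)) :=
    { toFun := fun x => ⟨x.1.1, ((hmem x.1).mp x.2).1⟩
      invFun := fun u => ⟨(u.1, w), (hmem (u.1, w)).mpr ⟨u.2, rfl⟩⟩
      left_inv := by
        intro x
        have h2 : x.1.2 = w := ((hmem x.1).mp x.2).2
        ext
        · rfl
        · exact h2.symm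
      right_inv := by intro u; rfl
      map_rel_iff' := by
        intro x y
        have hx : x.1.2 = w := ((hmem x.1).mp x.2).2
        have hy : y.1.2 = w := ((hmem y.1).mp y.2).2
        simp only [SimpleGraph.comap_adj, Function.Embedding.coe_subtype, Equiv.coe_fn_mk]
        have hx' : (x.1 : α × β) = (x.1.1, w) := Prod.ext rfl hx
        have hy' : (y.1 : α × β) = (y.1.1, w) := Prod.ext rfl hy
        constructor
        · intro h
          rw [hx', hy']
          exact SimpleGraph.boxProd_adj_left.mpr h
        · intro h
          rw [hx', hy'] at h
          exact SimpleGraph.boxProd_adj_left.mp h }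
  exact (SimpleGraph.Iso.connected_iff e).mpr hT

/-- Removing `k - 1` vertices from a `k`-connected graph keeps it connected. -/
lemma del_connected [Fintype α] (G : SimpleGraph α) (k : ℕ) (hk : 1 ≤ k)
    (hκ : k ≤ vertexConnectivity G) (hcard : 2 * k - 1 ≤ Fintype.card α)
    (T : Finset α) (hT : T.card = k - 1) :
    (G.induce ((↑T)ᶜ : Set α)).Connected := by
  classical
  by_contra h
  have hne : T ≠ Finset.univ := by
    intro heq
    have := Finset.card_univ (α := α)
    rw [heq] at hT
    omega
  have hmem : k - 1 ∈ {m | ∃ S : Finset α, S ≠ Finset.univ ∧ S.card = m ∧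
      (¬ (G.induce ((↑S)ᶜ : Set α)).Connected ∨ (Sᶜ : Finset α).card = 1)} :=
    ⟨T, hne, hT, Or.inl h⟩
  have := Nat.sInf_le hmem
  unfold vertexConnectivity at hκ
  omega

end Egg
section CutBound

lemma caseCD_arith (L g n a k : ℕ) (hk : 1 ≤ k) (ha : a ≤ k - 1) (hn : 2 * k - 1 ≤ n) :
    min (n * L) ((n + 2 - 2 * k) * L + 2 * g) ≤ (n - a) * L + g := by
  rcases le_or_gt (a * L) g with h | h
  · calc min (n * L) ((n + 2 - 2 * k) * L + 2 * g) ≤ n * L := min_le_left _ _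
      _ = (n - a) * L + a * L := by rw [← Nat.add_mul]; congr 1; omega
      _ ≤ (n - a) * L + g := by omega
  · have h1 : n - a = (n + 2 - 2 * k) + (2 * k - 2 - a) := by omega
    have h2 : a * L ≤ (2 * k - 2 - a) * L := Nat.mul_le_mul_right L (by omega)
    calc min (n * L) ((n + 2 - 2 * k) * L + 2 * g)
        ≤ (n + 2 - 2 * k) * L + 2 * g := min_le_right _ _
      _ ≤ (n + 2 - 2 * k) * L + (2 * k - 2 - a) * L + g := by omega
      _ = (n - a) * L + g := by rw [h1, Nat.add_mul]

variable {α β : Type*} [Fintype α] [Fintype β]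

lemma cut_bound (G : SimpleGraph α) (H : SimpleGraph β)
    (hH : H.Connected) (k : ℕ) (hk : 1 ≤ k) (hcard : 2 * k - 1 ≤ Fintype.card α)
    (T1 T2 : Finset α) (hT1 : T1.card = k - 1) (hT2 : T2.card = k - 1)
    (w1 w2 : β) (A : Finset (α × β))
    (hA1 : T1ᶜ ×ˢ ({w1} : Finset β) ⊆ A)
    (hA2 : ∀ p ∈ T2ᶜ ×ˢ ({w2} : Finset β), p ∉ A) :
    min (Fintype.card α * edgeConnectivity H)
      ((Fintype.card α + 2 - 2 * k) * edgeConnectivity H + 2 * edgeConnectivity G)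
      ≤ crossingEdges (G □ H) A := by
  classical
  set n := Fintype.card α with hn
  set L := edgeConnectivity H with hL
  set g := edgeConnectivity G with hg
  have hmem1 : ∀ u, u ∉ T1 → (u, w1) ∈ A := fun u hu =>
    hA1 (show (u, w1) ∈ T1ᶜ ×ˢ ({w1} : Finset β) from
      Finset.mem_product.mpr ⟨Finset.mem_compl.mpr hu, Finset.mem_singleton_self w1⟩)
  have hmem2 : ∀ u, u ∉ T2 → (u, w2) ∉ A := fun u hu =>
    hA2 (u, w2) (Finset.mem_product.mpr ⟨Finset.mem_compl.mpr hu, Finset.mem_singleton_self w2⟩)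
  set M := Finset.univ.filter (fun u => (fibB A u).Nonempty ∧ (fibB A u)ᶜ.Nonempty) with hM
  set P := Finset.univ.filter (fun u : α => fibB A u = Finset.univ) with hPdef
  set Q := Finset.univ.filter (fun u : α => fibB A u = ∅) with hQdef
  have hPT : P ⊆ T2 := by
    intro u hu
    by_contra hcon
    have h0 : fibB A u = Finset.univ := (Finset.mem_filter.mp hu).2
    have h1 : w2 ∈ fibB A u := h0 ▸ Finset.mem_univ w2
    have h2 : (u, w2) ∈ A := by simpa [fibB] using h1
    exact hmem2 u hcon h2
  have hQT : Q ⊆ T1 := by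
    intro u hu
    by_contra hcon
    have h1 : (u, w1) ∈ A := hmem1 u hcon
    have h2 : fibB A u = ∅ := (Finset.mem_filter.mp hu).2
    have h3 : w1 ∈ fibB A u := by simpa [fibB] using h1
    rw [h2] at h3
    simp at h3
  have hMPQ : M = (P ∪ Q)ᶜ := by
    ext u
    simp only [hM, hPdef, hQdef, Finset.mem_filter, Finset.mem_univ, true_and,
      Finset.mem_compl, Finset.mem_union, not_or]
    constructor
    · rintro ⟨⟨w, hw⟩, ⟨w', hw'⟩⟩
      constructor
      · intro he; rw [he] at hw'; simp at hw'
      · intro he; rw [he] at hw; simp at hw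
    · rintro ⟨h1, h2⟩
      refine ⟨Finset.nonempty_iff_ne_empty.mpr h2, ?_⟩
      rw [Finset.nonempty_iff_ne_empty]
      intro he
      apply h1
      rwa [Finset.compl_eq_empty_iff] at he
  have hMcard : M.card = n - (P ∪ Q).card := by
    rw [hMPQ, Finset.card_compl, hn]
  have hvert : M.card * L ≤ ∑ u : α, crossingEdges H (fibB A u) := by
    calc M.card * L = ∑ _u ∈ M, L := by rw [Finset.sum_const, smul_eq_mul]
      _ ≤ ∑ u ∈ M, crossingEdges H (fibB A u) := by
          apply Finset.sum_le_sum
          intro u hu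
          have h := Finset.mem_filter.mp hu
          exact edgeConnectivity_le_crossingEdges H _ h.2.1 h.2.2
      _ ≤ ∑ u : α, crossingEdges H (fibB A u) :=
          Finset.sum_le_sum_of_subset (Finset.subset_univ M)
  have hdecomp := crossing_decomp G H A
  -- facts about the two special rows
  have hT1c : T1ᶜ.Nonempty := by
    rw [← Finset.card_pos, Finset.card_compl, hT1]
    omega
  have hT2c : T2ᶜ.Nonempty := by
    rw [← Finset.card_pos, Finset.card_compl, hT2]
    omega
  have hrow1 : T1ᶜ ⊆ rowB A w1 := by
    intro u hu
    simp only [rowB, Finset.mem_filter, Finset.mem_univ, true_and]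
    exact hmem1 u (Finset.mem_compl.mp hu)
  have hrow2 : T2ᶜ ⊆ (rowB A w2)ᶜ := by
    intro u hu
    simp only [rowB, Finset.mem_compl, Finset.mem_filter, Finset.mem_univ, true_and]
    exact hmem2 u (Finset.mem_compl.mp hu)
  have hrow1mix : Q.Nonempty → g ≤ crossingEdges G (rowB A w1) := by
    rintro ⟨u, hu⟩
    apply edgeConnectivity_le_crossingEdges G _ (hT1c.mono hrow1)
    refine ⟨u, Finset.mem_compl.mpr ?_⟩
    have h2 : fibB A u = ∅ := (Finset.mem_filter.mp hu).2
    simp only [rowB, Finset.mem_filter, Finset.mem_univ, true_and]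
    intro hmem
    have : w1 ∈ fibB A u := by simpa [fibB] using hmem
    rw [h2] at this
    simp at this
  have hrow2mix : P.Nonempty → g ≤ crossingEdges G (rowB A w2) := by
    rintro ⟨u, hu⟩
    apply edgeConnectivity_le_crossingEdges G _ _ (hT2c.mono hrow2)
    refine ⟨u, ?_⟩
    have h0 : fibB A u = Finset.univ := (Finset.mem_filter.mp hu).2
    have h1 : w2 ∈ fibB A u := h0 ▸ Finset.mem_univ w2
    simp only [rowB, Finset.mem_filter, Finset.mem_univ, true_and]
    simpa [fibB] using h1
  by_cases hP : P = ∅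
  · by_cases hQ : Q = ∅
    · -- every fiber is mixed
      have hMuniv : M = Finset.univ := by
        rw [hMPQ, hP, hQ]
        simp
      have hM' : n ≤ M.card := by
        rw [hMuniv, Finset.card_univ, hn]
      calc min (n * L) ((n + 2 - 2 * k) * L + 2 * g) ≤ n * L := min_le_left _ _
        _ ≤ M.card * L := Nat.mul_le_mul_right L hM'
        _ ≤ ∑ u : α, crossingEdges H (fibB A u) := hvert
        _ ≤ crossingEdges (G □ H) A := le_trans (Nat.le_add_right _ _) hdecomp
    · -- Q nonempty, P empty
      have hQne : Q.Nonempty := Finset.nonempty_iff_ne_empty.mpr hQ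
      have ha : (P ∪ Q).card ≤ k - 1 := by
        rw [hP]
        simpa using (Finset.card_le_card hQT).trans_eq hT1
      have hhoriz : g ≤ ∑ w : β, crossingEdges G (rowB A w) :=
        le_trans (hrow1mix hQne)
          (Finset.single_le_sum (f := fun w => crossingEdges G (rowB A w))
            (fun _ _ => Nat.zero_le _) (Finset.mem_univ w1))
      calc min (n * L) ((n + 2 - 2 * k) * L + 2 * g)
          ≤ (n - (P ∪ Q).card) * L + g :=
            caseCD_arith L g n _ k hk ha (hn ▸ hcard)
        _ ≤ M.card * L + g := by rw [hMcard]
        _ ≤ (∑ u : α, crossingEdges H (fibB A u)) + ∑ w : β, crossingEdges G (rowB A w) := by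
            exact Nat.add_le_add hvert hhoriz
        _ ≤ crossingEdges (G □ H) A := hdecomp
  · by_cases hQ : Q = ∅
    · -- P nonempty, Q empty
      have hPne : P.Nonempty := Finset.nonempty_iff_ne_empty.mpr hP
      have ha : (P ∪ Q).card ≤ k - 1 := by
        rw [hQ]
        simpa using (Finset.card_le_card hPT).trans_eq hT2
      have hhoriz : g ≤ ∑ w : β, crossingEdges G (rowB A w) :=
        le_trans (hrow2mix hPne)
          (Finset.single_le_sum (f := fun w => crossingEdges G (rowB A w))
            (fun _ _ => Nat.zero_le _) (Finset.mem_univ w2))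
      calc min (n * L) ((n + 2 - 2 * k) * L + 2 * g)
          ≤ (n - (P ∪ Q).card) * L + g :=
            caseCD_arith L g n _ k hk ha (hn ▸ hcard)
        _ ≤ M.card * L + g := by rw [hMcard]
        _ ≤ (∑ u : α, crossingEdges H (fibB A u)) + ∑ w : β, crossingEdges G (rowB A w) := by
            exact Nat.add_le_add hvert hhoriz
        _ ≤ crossingEdges (G □ H) A := hdecomp
    · -- both nonempty
      have hPne : P.Nonempty := Finset.nonempty_iff_ne_empty.mpr hP
      have hQne : Q.Nonempty := Finset.nonempty_iff_ne_empty.mpr hQ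
      have hw12 : w1 ≠ w2 := by
        have hTcup : (T1 ∪ T2).card ≤ (2 * k - 1) - 1 := by
          have := Finset.card_union_le T1 T2
          omega
        have hTcupc : (T1 ∪ T2)ᶜ.Nonempty := by
          rw [← Finset.card_pos, Finset.card_compl]
          have : (T1 ∪ T2).card < Fintype.card α := by omega
          omega
        obtain ⟨u, hu⟩ := hTcupc
        simp only [Finset.mem_compl, Finset.mem_union, not_or] at hu
        intro he
        have h1 : (u, w1) ∈ A := hmem1 u hu.1
        have h2 : (u, w2) ∉ A := hmem2 u hu.2
        rw [he] at h1
        exact h2 h1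
      have hM' : n + 2 - 2 * k ≤ M.card := by
        have h1 : (P ∪ Q).card ≤ 2 * k - 2 := by
          have h2 := Finset.card_le_card (Finset.union_subset_union hPT hQT)
          have h3 := Finset.card_union_le T2 T1
          omega
        omega
      have hhoriz : g + g ≤ ∑ w : β, crossingEdges G (rowB A w) := by
        have hpair : ({w1, w2} : Finset β) ⊆ Finset.univ := Finset.subset_univ _
        calc g + g ≤ crossingEdges G (rowB A w1) + crossingEdges G (rowB A w2) :=
              Nat.add_le_add (hrow1mix hQne) (hrow2mix hPne)
          _ = ∑ w ∈ ({w1, w2} : Finset β), crossingEdges G (rowB A w) :=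
              (Finset.sum_pair (f := fun w => crossingEdges G (rowB A w)) hw12).symm
          _ ≤ ∑ w : β, crossingEdges G (rowB A w) :=
              Finset.sum_le_sum_of_subset hpair
      calc min (n * L) ((n + 2 - 2 * k) * L + 2 * g)
          ≤ (n + 2 - 2 * k) * L + 2 * g := min_le_right _ _
        _ ≤ M.card * L + (g + g) := by
            have := Nat.mul_le_mul_right L hM'
            omega
        _ ≤ (∑ u : α, crossingEdges H (fibB A u)) + ∑ w : β, crossingEdges G (rowB A w) :=
            Nat.add_le_add hvert hhoriz
        _ ≤ crossingEdges (G □ H) A := hdecomp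

end CutBound
section HitHelpers

variable {V : Type*} [Fintype V]

lemma hitNum_le_card (S : Finset (Finset V)) (h : ∀ E ∈ S, E.Nonempty) :
    hitNum S ≤ Fintype.card V := by
  apply Nat.sInf_le
  refine ⟨Finset.univ, fun E hE => ?_, Finset.card_univ⟩
  rw [Finset.inter_univ]
  exact h E hE

lemma le_hitNum (S : Finset (Finset V)) (m : ℕ) (hne : ∀ E ∈ S, E.Nonempty)
    (h : ∀ C : Finset V, (∀ E ∈ S, (E ∩ C).Nonempty) → m ≤ C.card) : m ≤ hitNum S := by
  unfold hitNum
  apply le_csInf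
  · exact ⟨Finset.univ.card, Finset.univ, fun E hE => by
      rw [Finset.inter_univ]; exact hne E hE, rfl⟩
  · rintro b ⟨C, hC, rfl⟩
    exact h C hC

end HitHelpers

theorem stmt13 {α β : Type*} [Fintype α] [Fintype β]
    (G : SimpleGraph α) (H : SimpleGraph β) (k : ℕ)
    (hG : G.Connected) (hH : H.Connected)
    (hκ : k ≤ vertexConnectivity G) (hcard : 2 * k - 1 ≤ Fintype.card α) :
    min (k * Fintype.card β)
      (min (Fintype.card α * edgeConnectivity H)
        ((Fintype.card α + 2 - 2 * k) * edgeConnectivity H + 2 * edgeConnectivity G)) ≤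
      scrambleNumber (G □ H) := by
  classical
  rcases Nat.eq_zero_or_pos k with hk0 | hk
  · calc min (k * Fintype.card β) _ ≤ k * Fintype.card β := min_le_left _ _
      _ = 0 := by rw [hk0, Nat.zero_mul]
      _ ≤ _ := Nat.zero_le _
  rcases Nat.eq_zero_or_pos (Fintype.card β) with hb0 | hb
  · calc min (k * Fintype.card β) _ ≤ k * Fintype.card β := min_le_left _ _
      _ = 0 := by rw [hb0, Nat.mul_zero]
      _ ≤ _ := Nat.zero_le _
  have hn1 : 1 ≤ Fintype.card α := by omega
  have hkn : k - 1 ≤ Fintype.card α := by omega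
  obtain ⟨T0, -, hT0⟩ := Finset.exists_superset_card_eq (s := (∅ : Finset α))
    (n := k - 1) (by simp) hkn
  obtain ⟨w0⟩ : Nonempty β := Fintype.card_pos_iff.mp hb
  set S : Finset (Finset (α × β)) :=
    ((Finset.univ.filter (fun T : Finset α => T.card = k - 1)) ×ˢ
      (Finset.univ : Finset β)).image (fun p => p.1ᶜ ×ˢ ({p.2} : Finset β)) with hSdef
  have hform : ∀ E ∈ S, ∃ T : Finset α, ∃ w : β, T.card = k - 1 ∧
      E = Tᶜ ×ˢ ({w} : Finset β) := by
    intro E hE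
    rw [hSdef, Finset.mem_image] at hE
    obtain ⟨p, hp, rfl⟩ := hE
    rw [Finset.mem_product, Finset.mem_filter] at hp
    exact ⟨p.1, p.2, hp.1.2, rfl⟩
  have heggne : ∀ (T : Finset α), T.card = k - 1 →
      (Tᶜ ×ˢ ({w0} : Finset β)).Nonempty ∧ ∀ w : β, (Tᶜ ×ˢ ({w} : Finset β)).Nonempty := by
    intro T hT
    have hTc : Tᶜ.Nonempty := by
      rw [← Finset.card_pos, Finset.card_compl, hT]
      omega
    exact ⟨Finset.nonempty_product.mpr ⟨hTc, Finset.singleton_nonempty _⟩,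
      fun w => Finset.nonempty_product.mpr ⟨hTc, Finset.singleton_nonempty _⟩⟩
  have hscr : IsScramble (G □ H) S := by
    constructor
    · rw [hSdef]
      apply Finset.Nonempty.image
      apply Finset.nonempty_product.mpr
      exact ⟨⟨T0, Finset.mem_filter.mpr ⟨Finset.mem_univ _, hT0⟩⟩, ⟨w0, Finset.mem_univ _⟩⟩
    · intro E hE
      obtain ⟨T, w, hT, rfl⟩ := hform E hE
      refine ⟨(heggne T hT).2 w, ?_⟩
      exact egg_connected G H T (del_connected G k hk hκ hcard T hT) w
  have hhit : k * Fintype.card β ≤ hitNum S := by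
    apply le_hitNum S _ (fun E hE => (hscr.2 E hE).1)
    intro C hChit
    have hcol : ∀ w : β, k ≤ (C.filter (fun p => p.2 = w)).card := by
      intro w
      by_contra hlt
      push_neg at hlt
      set Cw := (C.filter (fun p => p.2 = w)).image Prod.fst with hCwdef
      have hCw : Cw.card ≤ k - 1 := le_trans Finset.card_image_le (by omega)
      obtain ⟨T, hTsub, hTcard⟩ := Finset.exists_superset_card_eq hCw hkn
      have hE : (Tᶜ ×ˢ ({w} : Finset β)) ∈ S := by
        rw [hSdef, Finset.mem_image]
        exact ⟨(T, w), Finset.mem_product.mpr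
          ⟨Finset.mem_filter.mpr ⟨Finset.mem_univ _, hTcard⟩, Finset.mem_univ _⟩, rfl⟩
      obtain ⟨p, hp⟩ := hChit _ hE
      simp only [Finset.mem_inter] at hp
      obtain ⟨hp1, hp2⟩ := hp
      rw [Finset.mem_product] at hp1
      have hpC : p.1 ∈ Cw := Finset.mem_image.mpr
        ⟨p, Finset.mem_filter.mpr ⟨hp2, by simpa using hp1.2⟩, rfl⟩
      exact (Finset.mem_compl.mp hp1.1) (hTsub hpC)
    calc k * Fintype.card β = ∑ _w : β, k := by
          rw [Finset.sum_const, smul_eq_mul, Finset.card_univ, Nat.mul_comm]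
      _ ≤ ∑ w : β, (C.filter (fun p => p.2 = w)).card :=
          Finset.sum_le_sum fun w _ => hcol w
      _ = C.card := (Finset.card_eq_sum_card_fiberwise
          (f := fun p : α × β => p.2) (fun x _ => Finset.mem_univ _)).symm
  have hcut : ((min (Fintype.card α * edgeConnectivity H)
      ((Fintype.card α + 2 - 2 * k) * edgeConnectivity H + 2 * edgeConnectivity G) : ℕ) : ℕ∞)
      ≤ cutNum (G □ H) S := by
    apply le_sInf
    rintro x ⟨A, ⟨E1, hE1S, hE1A⟩, ⟨E2, hE2S, hE2A⟩, rfl⟩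
    obtain ⟨T1, w1, hT1, rfl⟩ := hform E1 hE1S
    obtain ⟨T2, w2, hT2, rfl⟩ := hform E2 hE2S
    have hE2A' : ∀ p ∈ T2ᶜ ×ˢ ({w2} : Finset β), p ∉ A := by
      intro p hp
      have h := hE2A hp
      simp only [Finset.mem_compl] at h
      exact h
    exact_mod_cast cut_bound G H hH k hk hcard T1 T2 hT1 hT2 w1 w2 A hE1A hE2A'
  -- combine into the scramble order
  set m := min (k * Fintype.card β)
      (min (Fintype.card α * edgeConnectivity H)
        ((Fintype.card α + 2 - 2 * k) * edgeConnectivity H + 2 * edgeConnectivity G)) with hmdef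
  have horder : m ≤ scrambleOrder (G □ H) S := by
    have h1 : (m : ℕ∞) ≤ min (hitNum S : ℕ∞) (cutNum (G □ H) S) := by
      apply le_min
      · exact_mod_cast le_trans (min_le_left _ _) hhit
      · exact le_trans (by exact_mod_cast (min_le_right _ _ : m ≤ _)) hcut
    have h2 : min (hitNum S : ℕ∞) (cutNum (G □ H) S) ≠ ⊤ := by
      intro he
      have hle := min_le_left (hitNum S : ℕ∞) (cutNum (G □ H) S)
      rw [he] at hle
      exact (ENat.coe_ne_top _) (top_le_iff.mp hle)
    unfold scrambleOrder
    have h3 := ENat.toNat_le_toNat h1 h2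
    rwa [ENat.toNat_coe] at h3
  have hbdd : BddAbove {m' | ∃ S' : Finset (Finset (α × β)), IsScramble (G □ H) S' ∧
      m' = scrambleOrder (G □ H) S'} := by
    refine ⟨Fintype.card (α × β), ?_⟩
    rintro b ⟨S', hS', rfl⟩
    have hub : hitNum S' ≤ Fintype.card (α × β) :=
      hitNum_le_card S' (fun E hE => (hS'.2 E hE).1)
    have h4 := ENat.toNat_le_toNat (min_le_left (hitNum S' : ℕ∞) (cutNum (G □ H) S'))
      (ENat.coe_ne_top _)
    rw [ENat.toNat_coe] at h4
    unfold scrambleOrder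
    exact h4.trans hub
  exact horder.trans (le_csSup hbdd ⟨S, hscr, rfl⟩)
end
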